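/- arXiv:2203.02294 — 8 statements merged into one kernel-verified Lean document; each statement's English description precedes it below -/
import Mathlib

section
/- Let Δ ⊂ ℝ² be a (nondegenerate) triangle. Then the minimum of λ > 0 such that -λΔ cannot be translated into the interior of Δ equals 1/2. Equivalently: for every λ < 1/2 there exists t ∈ ℝ² with -λΔ + t ⊆ interior(Δ), and for λ = 1/2 no translate of -λΔ lies in the interior of Δ. -/
/-!
Work in the barycentric coordinates of the triangle. The homothety with ratio `-λ` about the
centroid sends a vertex to the point with coordinates `(1 + λ)/3` (twice) and `(1 - 2λ)/3`, so for
`λ < 1/2` it maps the triangle into its interior. Conversely, for any `t`, the `i`-th coordinate of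
`-λ vᵢ + t` is `tᵢ - λ (1 - 0ᵢ)`, and these sum to `1 - 2λ`; for `λ = 1/2` some image of a vertex
therefore has a nonpositive coordinate. In an `n`-simplex the same computation gives `1/n`.
-/

open Set

theorem AffineMap.apply_smul_add {k V₁ V₂ : Type*} [Ring k] [AddCommGroup V₁] [Module k V₁]
    [AddCommGroup V₂] [Module k V₂] (f : V₁ →ᵃ[k] V₂) (c : k) (x t : V₁) :
    f (c • x + t) = c • (f x - f 0) + f t := by
  rw [← vadd_eq_add, f.map_vadd, map_smul, ← vsub_eq_sub (f x), ← f.linearMap_vsub, vsub_eq_sub,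
    sub_zero, vadd_eq_add]

namespace AffineBasis

theorem coord_homothety_centroid {ι k V P : Type*} [Fintype ι] [Field k] [CharZero k]
    [AddCommGroup V] [Module k V] [AddTorsor V P] (b : AffineBasis ι k P) (i : ι) (r : k) (p : P) :
    b.coord i (AffineMap.homothety (Finset.univ.centroid k b) r p) =
      (1 - r) * (Fintype.card ι : k)⁻¹ + r * b.coord i p := by
  rw [AffineMap.homothety_eq_lineMap, AffineMap.apply_lineMap,
    b.coord_apply_centroid (Finset.mem_univ i), AffineMap.lineMap_apply_ring, Finset.card_univ]

variable {ι E : Type*} [Fintype ι] [NormedAddCommGroup E] [NormedSpace ℝ E]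

theorem homothety_centroid_image_convexHull_subset_interior (b : AffineBasis ι ℝ E) {r : ℝ}
    (hr₀ : 0 ≤ r) (hr : r * (Fintype.card ι - 1) < 1) :
    AffineMap.homothety (Finset.univ.centroid ℝ b) (-r) '' convexHull ℝ (range b) ⊆
      interior (convexHull ℝ (range b)) := by
  rw [AffineMap.image_convexHull, ← range_comp]
  refine convexHull_min ?_ (convex_convexHull ℝ _).interior
  rw [b.interior_convexHull]
  rintro _ ⟨j, rfl⟩ i
  have hcard : (0 : ℝ) < Fintype.card ι := by
    have := b.nonempty
    exact_mod_cast Fintype.card_pos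
  rw [Function.comp_apply, coord_homothety_centroid]
  rcases eq_or_ne i j with rfl | hij
  · rw [coord_apply_eq]
    field_simp
    linarith
  · rw [b.coord_apply_ne hij, mul_zero, add_zero]
    exact mul_pos (by linarith) (inv_pos.2 hcard)

theorem not_neg_smul_add_image_convexHull_subset_interior (b : AffineBasis ι ℝ E) {r : ℝ}
    (hr : 1 ≤ r * (Fintype.card ι - 1)) (t : E) :
    ¬ (fun p => -r • p + t) '' convexHull ℝ (range b) ⊆ interior (convexHull ℝ (range b)) := by
  intro hsub
  have hpos : ∀ i, 0 < b.coord i (-r • b i + t) := by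
    intro i
    have hi := hsub ⟨b i, subset_convexHull ℝ _ (mem_range_self i), rfl⟩
    rw [b.interior_convexHull] at hi
    exact hi i
  have := b.nonempty
  have hsum : ∑ i, b.coord i (-r • b i + t) = 1 - r * (Fintype.card ι - 1) := by
    simp only [AffineMap.apply_smul_add, coord_apply_eq, smul_eq_mul, Finset.sum_add_distrib,
      ← Finset.mul_sum, Finset.sum_sub_distrib, sum_coord_apply_eq_one, Finset.sum_const,
      Finset.card_univ, nsmul_eq_mul, mul_one]
    ring
  linarith [Finset.sum_pos (fun i _ => hpos i) Finset.univ_nonempty]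

end AffineBasis

/-- For a nondegenerate triangle `Δ ⊂ ℝ²`: for every `0 < λ < 1/2` the set `-λΔ`
can be translated into the interior of `Δ`, while for `λ = 1/2` no translate of
`-λΔ` lies in the interior of `Δ`; i.e. the minimal `λ` with `-λΔ` not
translatable into `int Δ` equals `1/2`. -/
theorem min_scaling_neg_triangle_in_triangle (v₁ v₂ v₃ : ℝ × ℝ)
    (h : AffineIndependent ℝ ![v₁, v₂, v₃]) :
    (∀ lam : ℝ, 0 < lam → lam < 1/2 →
      ∃ t : ℝ × ℝ, (fun p => -lam • p + t) '' (convexHull ℝ {v₁, v₂, v₃}) ⊆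
        interior (convexHull ℝ {v₁, v₂, v₃})) ∧
    ¬ ∃ t : ℝ × ℝ, (fun p => -(1/2 : ℝ) • p + t) '' (convexHull ℝ {v₁, v₂, v₃}) ⊆
        interior (convexHull ℝ {v₁, v₂, v₃}) := by
  have hspan : affineSpan ℝ (range ![v₁, v₂, v₃]) = ⊤ := by
    rw [h.affineSpan_eq_top_iff_card_eq_finrank_add_one]
    simp
  let b : AffineBasis (Fin 3) ℝ (ℝ × ℝ) := ⟨_, h, hspan⟩
  have hb : range b = {v₁, v₂, v₃} := by
    change range ![v₁, v₂, v₃] = _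
    rw [Matrix.range_cons, Matrix.range_cons_cons_empty, singleton_union]
  rw [← hb]
  refine ⟨fun lam hlam₀ hlam => ⟨(1 + lam) • Finset.univ.centroid ℝ b, ?_⟩, ?_⟩
  · have hmap : (fun p => -lam • p + (1 + lam) • Finset.univ.centroid ℝ b) =
        AffineMap.homothety (Finset.univ.centroid ℝ b) (-lam) := by
      ext1 p
      rw [AffineMap.homothety_eq_lineMap, AffineMap.lineMap_apply_module]
      module
    rw [hmap]
    exact b.homothety_centroid_image_convexHull_subset_interior hlam₀.le (by norm_num; linarith)
  · rintro ⟨t, ht⟩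
    exact b.not_neg_smul_add_image_convexHull_subset_interior (by norm_num) t ht
end

section
/- Let a₁, a₂ ∈ [0,1]. Any convex body T ⊂ ℝ² of area 1/2 that contains a translate of the horizontal segment [(-1/2,0),(1/2,0)] and a translate of the vertical segment [(0,-1/2),(0,1/2)] must be a translate of the diamond ◇(a₁',a₂') = conv{[0,1]×{a₂'}, {a₁'}×[0,1]} for some a₁', a₂' ∈ [0,1]. In particular, the diamonds ◇(a₁,a₂) are exactly the area-minimizing convex bodies containing translates of both unit segments. -/
open Set MeasureTheory Pointwise

lemma stdTri_eq : convexHull ℝ ({((0:ℝ),(0:ℝ)), (1,0), (0,1)} : Set (ℝ×ℝ)) =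
    {p : ℝ×ℝ | 0 ≤ p.1 ∧ 0 ≤ p.2 ∧ p.1 + p.2 ≤ 1} := by
  apply Subset.antisymm
  · apply convexHull_min
    · rintro p (rfl | rfl | rfl) <;> norm_num
    · rintro p ⟨hp1, hp2, hp3⟩ q ⟨hq1, hq2, hq3⟩ a b ha hb hab
      refine ⟨?_, ?_, ?_⟩ <;>
        simp only [Prod.fst_add, Prod.snd_add, Prod.smul_fst, Prod.smul_snd, smul_eq_mul] <;>
        nlinarith
  · rintro p ⟨hp1, hp2, hp3⟩
    have := Finset.centerMass_mem_convexHull (s := ({((0:ℝ),(0:ℝ)), (1,0), (0,1)} : Set (ℝ×ℝ)))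
      (Finset.univ : Finset (Fin 3))
      (w := ![1 - p.1 - p.2, p.1, p.2]) (z := ![((0:ℝ),(0:ℝ)), (1,0), (0,1)])
      (by intro i _; fin_cases i <;> simp <;> linarith)
      (by simp [Fin.sum_univ_three]; linarith)
      (by intro i _; fin_cases i <;> simp)
    convert this using 2
    rw [Finset.centerMass]
    simp [Fin.sum_univ_three]
    have h1 : 1 - p.1 - p.2 + p.1 + p.2 = 1 := by ring
    rw [h1]
    simp

lemma line_null (c : ℝ) : volume {p : ℝ×ℝ | p.2 = c} = 0 := by
  have : {p : ℝ×ℝ | p.2 = c} = (univ : Set ℝ) ×ˢ ({c} : Set ℝ) := by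
    ext ⟨x,y⟩; simp [eq_comm]
  rw [this, Measure.volume_eq_prod, Measure.prod_prod]; simp

lemma diag_null : volume {p : ℝ×ℝ | p.1 + p.2 = 1} = 0 := by
  classical
  let f : (ℝ×ℝ) →ₗ[ℝ] (ℝ×ℝ) :=
    LinearMap.prod (LinearMap.fst ℝ ℝ ℝ - LinearMap.snd ℝ ℝ ℝ) (LinearMap.snd ℝ ℝ ℝ)
  have hf : ∀ q : ℝ×ℝ, f q = (q.1 - q.2, q.2) := fun q => rfl
  have himg : {p : ℝ×ℝ | p.1 + p.2 = 1} = f '' (({(1:ℝ)} : Set ℝ) ×ˢ (univ : Set ℝ)) := by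
    ext ⟨x,y⟩
    simp only [mem_setOf_eq, mem_image, mem_prod, mem_singleton_iff, mem_univ, and_true]
    constructor
    · intro h
      refine ⟨(1, y), rfl, ?_⟩
      rw [hf]; simp only [Prod.mk.injEq]
      exact ⟨by linarith, trivial⟩
    · rintro ⟨q, hq, heq⟩
      rw [hf] at heq
      obtain ⟨hx, hy⟩ := Prod.mk.injEq .. ▸ heq
      rw [← hx, ← hy, hq]; ring
  rw [himg, Measure.addHaar_image_linearMap]
  have : volume (({(1:ℝ)} : Set ℝ) ×ˢ (univ : Set ℝ)) = 0 := by
    rw [Measure.volume_eq_prod, Measure.prod_prod]; simp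
  rw [this, mul_zero]

lemma vol_stdTri :
    volume {p : ℝ×ℝ | 0 ≤ p.1 ∧ 0 ≤ p.2 ∧ p.1 + p.2 ≤ 1} = 1/2 := by
  set H : Set (ℝ×ℝ) := {p : ℝ×ℝ | 0 ≤ p.1 ∧ 0 ≤ p.2 ∧ p.1 + p.2 ≤ 1} with hHdef
  set H' : Set (ℝ×ℝ) := {p : ℝ×ℝ | p.1 ≤ 1 ∧ p.2 ≤ 1 ∧ 1 ≤ p.1 + p.2} with hH'def
  have hHm : MeasurableSet H := by
    apply MeasurableSet.inter (measurableSet_le measurable_const measurable_fst)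
    exact MeasurableSet.inter (measurableSet_le measurable_const measurable_snd)
      (measurableSet_le (measurable_fst.add measurable_snd) measurable_const)
  have hH'm : MeasurableSet H' := by
    apply MeasurableSet.inter (measurableSet_le measurable_fst measurable_const)
    exact MeasurableSet.inter (measurableSet_le measurable_snd measurable_const)
      (measurableSet_le measurable_const (measurable_fst.add measurable_snd))
  have hunion : H ∪ H' = (Icc (0:ℝ) 1) ×ˢ (Icc (0:ℝ) 1) := by
    ext ⟨x,y⟩
    simp only [H, H', mem_union, mem_setOf_eq, mem_prod, mem_Icc]
    constructor
    · rintro (⟨h1,h2,h3⟩|⟨h1,h2,h3⟩) <;> exact ⟨⟨by linarith, by linarith⟩, by linarith, by linarith⟩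
    · rintro ⟨⟨h1,h2⟩,h3,h4⟩
      rcases le_total (x+y) 1 with h|h
      · left; exact ⟨h1, h3, h⟩
      · right; exact ⟨h2, h4, h⟩
  have hinter : volume (H ∩ H') = 0 := by
    refine measure_mono_null ?_ diag_null
    rintro ⟨x,y⟩ ⟨⟨_,_,h3⟩,⟨_,_,h6⟩⟩
    simp only [mem_setOf_eq]; dsimp at h3 h6; linarith
  have hrefl : H' = (fun p => ((1:ℝ),(1:ℝ)) + p) '' ((-1 : ℝ) • H) := by
    ext ⟨x,y⟩
    constructor
    · rintro ⟨h1,h2,h3⟩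
      refine ⟨(-1 : ℝ) • ((1-x, 1-y) : ℝ×ℝ), smul_mem_smul_set ?_, ?_⟩
      · refine ⟨show (0:ℝ) ≤ 1 - x by dsimp at h1 h2 h3; linarith,
          show (0:ℝ) ≤ 1 - y by dsimp at h1 h2 h3; linarith,
          show (1-x) + (1-y) ≤ 1 by dsimp at h1 h2 h3; linarith⟩
      · simp only [Prod.smul_mk, smul_eq_mul, Prod.mk_add_mk, Prod.mk.injEq]
        constructor <;> ring
    · rintro ⟨q, ⟨r, ⟨h1,h2,h3⟩, rfl⟩, h⟩
      have hx : x = 1 + (-1) * r.1 := by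
        have := congrArg Prod.fst h; simpa using this.symm
      have hy : y = 1 + (-1) * r.2 := by
        have := congrArg Prod.snd h; simpa using this.symm
      refine ⟨?_, ?_, ?_⟩
      · show x ≤ 1; rw [hx]; linarith
      · show y ≤ 1; rw [hy]; linarith
      · show 1 ≤ x + y; rw [hx, hy]; linarith
  have hvolH' : volume H' = volume H := by
    rw [hrefl, Set.image_add_left, measure_preimage_add, Measure.addHaar_smul]
    simp
  have hsq : volume (H ∪ H') = 1 := by
    rw [hunion, Measure.volume_eq_prod, Measure.prod_prod, Real.volume_Icc]
    simp
  have key := measure_union_add_inter (μ := volume) H hH'm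
  rw [hsq, hinter, hvolH', add_zero, ← two_mul] at key
  rw [ENNReal.eq_div_iff (by norm_num) (by norm_num)]
  exact key.symm

example : (1/2 : ENNReal) = ENNReal.ofReal (1/2) := by
  rw [ENNReal.ofReal_div_of_pos] <;> norm_num

lemma hullshift (p : ℝ×ℝ) (S : Set (ℝ×ℝ)) :
    convexHull ℝ ((fun q => p + q) '' S) = (fun q => p + q) '' convexHull ℝ S := by
  have := (AffineEquiv.constVAdd ℝ (ℝ×ℝ) p).toAffineMap.image_convexHull S
  simpa using this.symm

lemma vol_tri (p u v : ℝ×ℝ) :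
    volume (convexHull ℝ {p, p+u, p+v}) = ENNReal.ofReal (|u.1*v.2 - u.2*v.1| / 2) := by
  classical
  set f : (ℝ×ℝ) →ₗ[ℝ] (ℝ×ℝ) := (LinearMap.fst ℝ ℝ ℝ).smulRight u + (LinearMap.snd ℝ ℝ ℝ).smulRight v with hfdef
  have hdet : LinearMap.det f = u.1*v.2 - u.2*v.1 := by
    rw [← LinearMap.det_toMatrix (Module.Basis.finTwoProd ℝ), Matrix.det_fin_two]
    simp [f, LinearMap.toMatrix_apply, Module.Basis.finTwoProd]
    ring
  have hf : ∀ q : ℝ×ℝ, f q = q.1 • u + q.2 • v := fun q => rfl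
  have himg : f '' ({((0:ℝ),(0:ℝ)), (1,0), (0,1)} : Set (ℝ×ℝ)) = {0, u, v} := by
    rw [show ({((0:ℝ),(0:ℝ)), (1,0), (0,1)} : Set (ℝ×ℝ)) = insert ((0:ℝ),(0:ℝ)) (insert ((1:ℝ),(0:ℝ)) {((0:ℝ),(1:ℝ))}) from rfl]
    rw [image_insert_eq, image_insert_eq, image_singleton]
    simp [hf]
  have h1 : ({p, p+u, p+v} : Set (ℝ×ℝ)) = (fun q => p + q) '' {0, u, v} := by
    rw [show ({(0:ℝ×ℝ), u, v} : Set (ℝ×ℝ)) = insert (0:ℝ×ℝ) (insert u {v}) from rfl]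
    rw [image_insert_eq, image_insert_eq, image_singleton]
    simp
  rw [h1, hullshift, Set.image_add_left, measure_preimage_add]
  rw [← himg, ← f.image_convexHull, Measure.addHaar_image_linearMap, hdet, stdTri_eq, vol_stdTri]
  rw [show (1/2 : ENNReal) = ENNReal.ofReal (1/2) by rw [ENNReal.ofReal_div_of_pos] <;> norm_num]
  rw [← ENNReal.ofReal_mul (abs_nonneg _)]
  ring_nf


open Metric in
lemma vol_lt_of_not_mem (T K : Set (ℝ×ℝ)) (hconv : Convex ℝ T) (hK : IsCompact K)
    (hKT : K ⊆ T) (hKpos : volume K ≠ 0) (x : ℝ×ℝ) (hxT : x ∈ T) (hxK : x ∉ K) :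
    volume K < volume T := by
  have hKne : K.Nonempty := nonempty_of_measure_ne_zero hKpos
  set ε := infDist x K with hεdef
  have hε : 0 < ε := hK.isClosed.notMem_iff_infDist_pos hKne |>.mp hxK
  obtain ⟨R, hR⟩ := hK.isBounded.subset_closedBall 0
  have hRx : ∀ k ∈ K, ‖x - k‖ ≤ ‖x‖ + R := by
    intro k hk
    have : ‖k‖ ≤ R := by simpa [Metric.mem_closedBall, dist_eq_norm] using hR hk
    calc ‖x - k‖ ≤ ‖x‖ + ‖k‖ := norm_sub_le _ _
    _ ≤ ‖x‖ + R := by linarith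
  set D : ℝ := ‖x‖ + R + 1 with hDdef
  have hD : 0 < D := by
    obtain ⟨k₀, hk₀⟩ := hKne
    have h0 : (0:ℝ) ≤ ‖x - k₀‖ := norm_nonneg _
    have := hRx k₀ hk₀
    linarith
  set t : ℝ := min (1/2) (ε/(2*D)) with htdef
  have ht0 : 0 < t := lt_min (by norm_num) (by positivity)
  have ht1 : t ≤ 1/2 := min_le_left _ _
  have htD : t ≤ ε/(2*D) := min_le_right _ _
  set C : Set (ℝ×ℝ) := (fun q => (x - t • x) + q) '' (t • K) with hCdef
  have hCT : C ⊆ T := by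
    rintro _ ⟨_, ⟨k, hk, rfl⟩, rfl⟩
    show (x - t • x) + t • k ∈ T
    have heq : (x - t • x) + t • k = (1-t) • x + t • k := by module
    rw [heq]
    exact hconv hxT (hKT hk) (by linarith) ht0.le (by ring)
  have hdistC : ∀ c ∈ C, dist x c < ε := by
    rintro _ ⟨_, ⟨k, hk, rfl⟩, rfl⟩
    show dist x ((x - t • x) + t • k) < ε
    have h1 : dist x ((x - t • x) + t • k) = ‖t • (x - k)‖ := by
      rw [dist_eq_norm]; congr 1; module
    rw [h1, norm_smul, Real.norm_eq_abs, abs_of_pos ht0]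
    have h2 : ‖x - k‖ ≤ D := le_trans (hRx k hk) (by linarith)
    calc t * ‖x - k‖ ≤ (ε/(2*D)) * D := by
          apply mul_le_mul htD h2 (norm_nonneg _) (by positivity)
    _ = ε/2 := by field_simp
    _ < ε := by linarith
  have hdisj : Disjoint K C := by
    rw [Set.disjoint_right]
    intro c hc hcK
    have h1 := hdistC c hc
    have h2 : ε ≤ dist x c := infDist_le_dist_of_mem hcK
    linarith
  have hCc : IsCompact C := ((hK.smul t).image (by continuity))
  have hvolC : volume C = ENNReal.ofReal (t^2) * volume K := by
    rw [hCdef, Set.image_add_left, measure_preimage_add, Measure.addHaar_smul]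
    congr 2
    rw [abs_of_pos (by positivity)]
    congr 1
    simp
  have hCpos : volume C ≠ 0 := by
    rw [hvolC]
    exact mul_ne_zero (by simp [ENNReal.ofReal_eq_zero]; positivity) hKpos
  calc volume K < volume K + volume C :=
        ENNReal.lt_add_right hK.measure_lt_top.ne hCpos
  _ = volume (K ∪ C) := (measure_union hdisj hCc.isClosed.measurableSet).symm
  _ ≤ volume T := measure_mono (union_subset hKT hCT)

lemma hullshift' (t : ℝ×ℝ) (S : Set (ℝ×ℝ)) :
    (fun q => q + t) '' convexHull ℝ S = (fun q => q + t) '' convexHull ℝ S := rfl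

lemma hullshift2 (t : ℝ×ℝ) (S : Set (ℝ×ℝ)) :
    (fun q => q + t) '' convexHull ℝ S = convexHull ℝ ((fun q => q + t) '' S) := by
  have h : (fun q : ℝ×ℝ => q + t) = (fun q => t + q) := by funext q; exact add_comm _ _
  rw [h, ← hullshift]

lemma tri_le (T : Set (ℝ×ℝ)) (hconv : Convex ℝ T) (p u v : ℝ×ℝ)
    (h1 : p ∈ T) (h2 : p + u ∈ T) (h3 : p + v ∈ T) :
    ENNReal.ofReal (|u.1*v.2 - u.2*v.1| / 2) ≤ volume T := by
  rw [← vol_tri p u v]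
  exact measure_mono (convexHull_min (by rintro q (rfl|rfl|rfl) <;> assumption) hconv)

lemma half_eq : (1/2 : ENNReal) = ENNReal.ofReal (1/2) := by
  rw [ENNReal.ofReal_div_of_pos] <;> norm_num

lemma half_bound {T : Set (ℝ×ℝ)} (hvol : volume T = 1/2) {c : ℝ}
    (h : ENNReal.ofReal (c / 2) ≤ volume T) : c ≤ 1 := by
  rw [hvol, half_eq, ENNReal.ofReal_le_ofReal_iff (by norm_num)] at h
  linarith

lemma convex_snd_le (c : ℝ) : Convex ℝ {p : ℝ×ℝ | p.2 ≤ c} := by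
  intro p hp q hq α β hα hβ hαβ
  simp only [mem_setOf_eq, Prod.snd_add, Prod.smul_snd, smul_eq_mul] at *
  calc α * p.2 + β * q.2 ≤ α * c + β * c :=
      add_le_add (mul_le_mul_of_nonneg_left hp hα) (mul_le_mul_of_nonneg_left hq hβ)
  _ = c := by rw [← add_mul, hαβ, one_mul]

lemma convex_snd_ge (c : ℝ) : Convex ℝ {p : ℝ×ℝ | c ≤ p.2} := by
  intro p hp q hq α β hα hβ hαβ
  simp only [mem_setOf_eq, Prod.snd_add, Prod.smul_snd, smul_eq_mul] at *
  calc c = α * c + β * c := by rw [← add_mul, hαβ, one_mul]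
  _ ≤ α * p.2 + β * q.2 :=
      add_le_add (mul_le_mul_of_nonneg_left hp hα) (mul_le_mul_of_nonneg_left hq hβ)

/-- Any convex body `T ⊂ ℝ²` of area `1/2` containing a translate of the
horizontal segment `[(-1/2,0),(1/2,0)]` and a translate of the vertical segment
`[(0,-1/2),(0,1/2)]` is a translate of a diamond
`◇(a₁',a₂') = conv{(0,a₂'),(1,a₂'),(a₁',0),(a₁',1)}` for some `a₁', a₂' ∈ [0,1]`. -/
theorem area_min_cover_of_unit_cross_is_diamond (T : Set (ℝ × ℝ))
    (hconv : Convex ℝ T) (hcomp : IsCompact T) (hint : (interior T).Nonempty)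
    (hvol : volume T = 1/2)
    (hH : ∃ t : ℝ × ℝ, (fun p => p + t) '' segment ℝ (-(1/2 : ℝ), (0:ℝ)) ((1/2 : ℝ), (0:ℝ)) ⊆ T)
    (hV : ∃ t : ℝ × ℝ, (fun p => p + t) '' segment ℝ ((0:ℝ), -(1/2 : ℝ)) ((0:ℝ), (1/2 : ℝ)) ⊆ T) :
    ∃ a₁' a₂' : ℝ, a₁' ∈ Icc (0:ℝ) 1 ∧ a₂' ∈ Icc (0:ℝ) 1 ∧
      ∃ t : ℝ × ℝ, T = (fun p => p + t) '' (convexHull ℝ {((0:ℝ), a₂'), (1, a₂'), (a₁', 0), (a₁', 1)}) := by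
  obtain ⟨t1, hH1⟩ := hH
  obtain ⟨t2, hV1⟩ := hV
  rw [show (fun p : ℝ×ℝ => p + t1) = (fun p => t1 + p) from funext fun p => add_comm _ _,
    segment_translate_image] at hH1
  rw [show (fun p : ℝ×ℝ => p + t2) = (fun p => t2 + p) from funext fun p => add_comm _ _,
    segment_translate_image] at hV1
  set x₀ : ℝ := t1.1 - 1/2 with hx₀
  set b : ℝ := t1.2 with hb
  set a : ℝ := t2.1 with ha
  set y₀ : ℝ := t2.2 - 1/2 with hy₀
  have e1 : t1 + ((-(1/2) : ℝ), (0:ℝ)) = ((x₀ : ℝ), b) := Prod.ext (by simp [hx₀]; try ring) (by simp [hb])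
  have e2 : t1 + (((1/2) : ℝ), (0:ℝ)) = ((x₀ + 1 : ℝ), b) := Prod.ext (by simp [hx₀]; try ring) (by simp [hb])
  have e3 : t2 + ((0:ℝ), (-(1/2) : ℝ)) = ((a : ℝ), y₀) := Prod.ext (by simp [ha]) (by simp [hy₀]; try ring)
  have e4 : t2 + ((0:ℝ), ((1/2) : ℝ)) = ((a : ℝ), y₀ + 1) := Prod.ext (by simp [ha]) (by simp [hy₀]; try ring)
  rw [e1, e2] at hH1
  rw [e3, e4] at hV1
  have hP₁ : ((x₀ : ℝ), b) ∈ T := hH1 (left_mem_segment ℝ _ _)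
  have hP₂ : ((x₀ + 1 : ℝ), b) ∈ T := hH1 (right_mem_segment ℝ _ _)
  have hQ₁ : ((a : ℝ), y₀) ∈ T := hV1 (left_mem_segment ℝ _ _)
  have hQ₂ : ((a : ℝ), y₀ + 1) ∈ T := hV1 (right_mem_segment ℝ _ _)
  clear_value x₀ b a y₀
  rcases lt_or_ge a x₀ with hc | h1
  · -- a < x₀ : big triangle Q₁ Q₂ P₂
    exfalso
    have hle := tri_le T hconv ((a:ℝ), y₀) ((0:ℝ),(1:ℝ)) ((x₀+1-a : ℝ), (b - y₀)) hQ₁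
      (by rw [show ((a:ℝ),y₀) + ((0:ℝ),(1:ℝ)) = ((a:ℝ), y₀+1) from Prod.ext (by simp) rfl]; exact hQ₂)
      (by rw [show ((a:ℝ),y₀) + ((x₀+1-a : ℝ), (b - y₀)) = ((x₀+1:ℝ), b) from
          Prod.ext (by simp; try ring) (by simp)]; exact hP₂)
    have habs : |(((0:ℝ),(1:ℝ)) : ℝ×ℝ).1 * (((x₀+1-a : ℝ), (b - y₀)) : ℝ×ℝ).2
        - (((0:ℝ),(1:ℝ)) : ℝ×ℝ).2 * (((x₀+1-a : ℝ), (b - y₀)) : ℝ×ℝ).1| = x₀ + 1 - a := by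
      simp only
      rw [show (0:ℝ) * (b - y₀) - 1 * (x₀+1-a) = -(x₀+1-a) by ring, abs_neg,
        abs_of_pos (by linarith)]
    rw [habs] at hle
    have := half_bound hvol hle
    linarith
  rcases lt_or_ge (x₀ + 1) a with hc | h2
  · -- a > x₀+1 : big triangle Q₁ Q₂ P₁
    exfalso
    have hle := tri_le T hconv ((a:ℝ), y₀) ((0:ℝ),(1:ℝ)) ((x₀-a : ℝ), (b - y₀)) hQ₁
      (by rw [show ((a:ℝ),y₀) + ((0:ℝ),(1:ℝ)) = ((a:ℝ), y₀+1) from Prod.ext (by simp) rfl]; exact hQ₂)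
      (by rw [show ((a:ℝ),y₀) + ((x₀-a : ℝ), (b - y₀)) = ((x₀:ℝ), b) from
          Prod.ext (by simp) (by simp)]; exact hP₁)
    have habs : |(0:ℝ) * (b - y₀) - 1 * (x₀-a)| = a - x₀ := by
      rw [show (0:ℝ) * (b - y₀) - 1 * (x₀-a) = a - x₀ by ring, abs_of_pos (by linarith)]
    rw [habs] at hle
    have := half_bound hvol hle
    linarith
  rcases lt_or_ge b y₀ with hc | h3
  · -- b < y₀ : big triangle P₁ P₂ Q₂
    exfalso
    have hle := tri_le T hconv ((x₀:ℝ), b) ((1:ℝ),(0:ℝ)) ((a - x₀ : ℝ), (y₀ + 1 - b)) hP₁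
      (by rw [show ((x₀:ℝ),b) + ((1:ℝ),(0:ℝ)) = ((x₀+1:ℝ), b) from Prod.ext rfl (by simp)]; exact hP₂)
      (by rw [show ((x₀:ℝ),b) + ((a - x₀ : ℝ), (y₀ + 1 - b)) = ((a:ℝ), y₀+1) from
          Prod.ext (by simp) (by simp; try ring)]; exact hQ₂)
    have habs : |(1:ℝ) * (y₀ + 1 - b) - 0 * (a - x₀)| = y₀ + 1 - b := by
      rw [show (1:ℝ) * (y₀ + 1 - b) - 0 * (a - x₀) = y₀ + 1 - b by ring, abs_of_pos (by linarith)]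
    rw [habs] at hle
    have := half_bound hvol hle
    linarith
  rcases lt_or_ge (y₀ + 1) b with hc | h4
  · -- b > y₀+1 : big triangle P₁ P₂ Q₁
    exfalso
    have hle := tri_le T hconv ((x₀:ℝ), b) ((1:ℝ),(0:ℝ)) ((a - x₀ : ℝ), (y₀ - b)) hP₁
      (by rw [show ((x₀:ℝ),b) + ((1:ℝ),(0:ℝ)) = ((x₀+1:ℝ), b) from Prod.ext rfl (by simp)]; exact hP₂)
      (by rw [show ((x₀:ℝ),b) + ((a - x₀ : ℝ), (y₀ - b)) = ((a:ℝ), y₀) from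
          Prod.ext (by simp) (by simp)]; exact hQ₁)
    have habs : |(1:ℝ) * (y₀ - b) - 0 * (a - x₀)| = b - y₀ := by
      rw [show (1:ℝ) * (y₀ - b) - 0 * (a - x₀) = -(b - y₀) by ring, abs_neg,
        abs_of_pos (by linarith)]
    rw [habs] at hle
    have := half_bound hvol hle
    linarith
  -- crossing case
  set P₁ : ℝ×ℝ := ((x₀:ℝ), b) with hP₁def
  set P₂ : ℝ×ℝ := ((x₀+1:ℝ), b) with hP₂def
  set Q₁ : ℝ×ℝ := ((a:ℝ), y₀) with hQ₁def
  set Q₂ : ℝ×ℝ := ((a:ℝ), y₀+1) with hQ₂def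
  set K : Set (ℝ×ℝ) := convexHull ℝ {P₁, P₂, Q₁, Q₂} with hKdef
  have hKT : K ⊆ T := convexHull_min
    (by rintro q (rfl|rfl|rfl|rfl) <;> assumption) hconv
  have hKcomp : IsCompact K := (Set.toFinite _).isCompact_convexHull ℝ
  -- lower triangle
  have eL : P₁ + ((1:ℝ),(0:ℝ)) = P₂ := Prod.ext (by simp [P₁, P₂, Q₁, Q₂]) (by simp [P₁, P₂, Q₁, Q₂])
  have eQ₁ : P₁ + ((a - x₀ : ℝ), (y₀ - b)) = Q₁ := Prod.ext (by simp [P₁, P₂, Q₁, Q₂]) (by simp [P₁, P₂, Q₁, Q₂])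
  have eQ₂ : P₁ + ((a - x₀ : ℝ), (y₀ + 1 - b)) = Q₂ := Prod.ext (by simp [P₁, P₂, Q₁, Q₂]) (by simp [P₁, P₂, Q₁, Q₂]; try ring)
  set T₁ : Set (ℝ×ℝ) := convexHull ℝ {P₁, P₁ + ((1:ℝ),(0:ℝ)), P₁ + ((a - x₀ : ℝ), (y₀ - b))} with hT₁def
  set T₂ : Set (ℝ×ℝ) := convexHull ℝ {P₁, P₁ + ((1:ℝ),(0:ℝ)), P₁ + ((a - x₀ : ℝ), (y₀ + 1 - b))} with hT₂def
  have hvolT₁ : volume T₁ = ENNReal.ofReal ((b - y₀)/2) := by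
    rw [hT₁def, vol_tri]
    congr 1
    have hshow : (((1:ℝ),(0:ℝ)) : ℝ×ℝ).1 * (((a - x₀ : ℝ), (y₀ - b)) : ℝ×ℝ).2
        - (((1:ℝ),(0:ℝ)) : ℝ×ℝ).2 * (((a - x₀ : ℝ), (y₀ - b)) : ℝ×ℝ).1 = -(b - y₀) := by
      show (1:ℝ) * (y₀ - b) - 0 * (a - x₀) = -(b - y₀); ring
    rw [hshow, abs_neg, abs_of_nonneg (by linarith)]
  have hvolT₂ : volume T₂ = ENNReal.ofReal ((y₀ + 1 - b)/2) := by
    rw [hT₂def, vol_tri]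
    congr 1
    have hshow : (((1:ℝ),(0:ℝ)) : ℝ×ℝ).1 * (((a - x₀ : ℝ), (y₀ + 1 - b)) : ℝ×ℝ).2
        - (((1:ℝ),(0:ℝ)) : ℝ×ℝ).2 * (((a - x₀ : ℝ), (y₀ + 1 - b)) : ℝ×ℝ).1 = y₀ + 1 - b := by
      show (1:ℝ) * (y₀ + 1 - b) - 0 * (a - x₀) = y₀ + 1 - b; ring
    rw [hshow, abs_of_nonneg (by linarith)]
  have hT₁K : T₁ ⊆ K := by
    rw [hT₁def, eL, eQ₁]
    refine convexHull_mono ?_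
    rintro q (rfl|rfl|rfl)
    · exact mem_insert _ _
    · exact mem_insert_of_mem _ (mem_insert _ _)
    · exact mem_insert_of_mem _ (mem_insert_of_mem _ (mem_insert _ _))
  have hT₂K : T₂ ⊆ K := by
    rw [hT₂def, eL, eQ₂]
    refine convexHull_mono ?_
    rintro q (rfl|rfl|rfl)
    · exact mem_insert _ _
    · exact mem_insert_of_mem _ (mem_insert _ _)
    · exact mem_insert_of_mem _ (mem_insert_of_mem _ (mem_insert_of_mem _ rfl))
  have hT₁le : T₁ ⊆ {p : ℝ×ℝ | p.2 ≤ b} := by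
    rw [hT₁def, eL, eQ₁]
    refine convexHull_min ?_ (convex_snd_le b)
    rintro q (rfl|rfl|rfl)
    · show P₁.2 ≤ b; exact le_rfl
    · show P₂.2 ≤ b; exact le_rfl
    · show Q₁.2 ≤ b; exact h3
  have hT₂ge : T₂ ⊆ {p : ℝ×ℝ | b ≤ p.2} := by
    rw [hT₂def, eL, eQ₂]
    refine convexHull_min ?_ (convex_snd_ge b)
    rintro q (rfl|rfl|rfl)
    · show b ≤ P₁.2; exact le_rfl
    · show b ≤ P₂.2; exact le_rfl
    · show b ≤ Q₂.2; show b ≤ y₀ + 1; linarith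
  have hinter : volume (T₁ ∩ T₂) = 0 := by
    refine measure_mono_null ?_ (line_null b)
    rintro q ⟨hq1, hq2⟩
    exact le_antisymm (hT₁le hq1) (hT₂ge hq2)
  have hT₂m : MeasurableSet T₂ :=
    ((Set.toFinite _).isCompact_convexHull ℝ).isClosed.measurableSet
  have hKhalf : ENNReal.ofReal (1/2) ≤ volume K := by
    have key := measure_union_add_inter (μ := volume) T₁ hT₂m
    rw [hinter, add_zero, hvolT₁, hvolT₂, ← ENNReal.ofReal_add (by linarith) (by linarith)] at key
    rw [show (b - y₀)/2 + (y₀ + 1 - b)/2 = 1/2 by ring] at key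
    rw [← key]
    exact measure_mono (union_subset hT₁K hT₂K)
  have hvolT' : volume T = ENNReal.ofReal (1/2) := by rw [hvol, half_eq]
  have hTK : T = K := by
    by_contra hne
    obtain ⟨x, hx1, hx2⟩ := Set.exists_of_ssubset (hKT.ssubset_of_ne (Ne.symm hne))
    have hKpos : volume K ≠ 0 := by
      intro h0
      rw [h0] at hKhalf
      simp [ENNReal.ofReal_eq_zero] at hKhalf
    have hlt := vol_lt_of_not_mem T K hconv hKcomp hKT hKpos x hx1 hx2
    rw [hvolT'] at hlt
    exact absurd (lt_of_le_of_lt hKhalf hlt) (lt_irrefl _)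
  refine ⟨a - x₀, b - y₀, ⟨by linarith, by linarith⟩, ⟨by linarith, by linarith⟩, (x₀, y₀), ?_⟩
  rw [hTK, hKdef]
  rw [hullshift2]
  congr 1
  rw [image_insert_eq, image_insert_eq, image_insert_eq, image_singleton]
  rw [show ((0:ℝ), b - y₀) + ((x₀:ℝ), y₀) = P₁ from Prod.ext (by simp [P₁, P₂, Q₁, Q₂]) (by simp [P₁, P₂, Q₁, Q₂]),
    show ((1:ℝ), b - y₀) + ((x₀:ℝ), y₀) = P₂ from Prod.ext (by simp [P₁, P₂, Q₁, Q₂]; try ring) (by simp [P₁, P₂, Q₁, Q₂]),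
    show ((a - x₀ : ℝ), (0:ℝ)) + ((x₀:ℝ), y₀) = Q₁ from Prod.ext (by simp [P₁, P₂, Q₁, Q₂]) (by simp [P₁, P₂, Q₁, Q₂]),
    show ((a - x₀ : ℝ), (1:ℝ)) + ((x₀:ℝ), y₀) = Q₂ from Prod.ext (by simp [P₁, P₂, Q₁, Q₂]) (by simp [P₁, P₂, Q₁, Q₂]; try ring)]
end

section
/- Any convex body T ⊂ ℝ² containing a translate of the horizontal segment of length 1 and a translate of the vertical segment of length 1 has area at least 1/2. -/
open Set MeasureTheory
open scoped ENNReal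

/-- A horizontal segment inside a convex set gives a lower bound on the slice measure. -/
lemma slice_lb {T : Set (ℝ × ℝ)} (hconv : Convex ℝ T) {P Q : ℝ × ℝ}
    (hP : P ∈ T) (hQ : Q ∈ T) (h2 : P.2 = Q.2) :
    ENNReal.ofReal (Q.1 - P.1) ≤ volume {x : ℝ | (x, P.2) ∈ T} := by
  rcases le_or_gt Q.1 P.1 with h | h
  · rw [ENNReal.ofReal_eq_zero.mpr (by linarith)]
    exact bot_le
  · have hsub : Icc P.1 Q.1 ⊆ {x : ℝ | (x, P.2) ∈ T} := by
      intro x hx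
      set s : ℝ := (x - P.1) / (Q.1 - P.1) with hs
      have hne : Q.1 - P.1 ≠ 0 := by linarith
      have hs0 : 0 ≤ s := div_nonneg (by linarith [hx.1]) (by linarith)
      have hs1 : s ≤ 1 := (div_le_one (by linarith)).mpr (by linarith [hx.2])
      have hmem := hconv hP hQ (by linarith : (0:ℝ) ≤ 1 - s) hs0 (by ring)
      have hx1 : (1 - s) * P.1 + s * Q.1 = x := by
        have h' : s * (Q.1 - P.1) = x - P.1 := div_mul_cancel₀ _ hne
        linarith [h']
      have : (1 - s) • P + s • Q = (x, P.2) := by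
        ext
        · simpa using hx1
        · show (1 - s) * P.2 + s * Q.2 = P.2
          rw [h2]; ring
      rwa [this] at hmem
    calc ENNReal.ofReal (Q.1 - P.1) = volume (Icc P.1 Q.1) := by
          rw [Real.volume_Icc]
      _ ≤ volume {x : ℝ | (x, P.2) ∈ T} := measure_mono hsub

/-- Triangle bound: horizontal unit segment at height `b` plus a point at height `e`. -/
lemma tri_lb {T : Set (ℝ × ℝ)} (hconv : Convex ℝ T) {a b c e : ℝ}
    (hA : ((a, b) : ℝ × ℝ) ∈ T) (hB : ((a + 1, b) : ℝ × ℝ) ∈ T)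
    (hC : ((c, e) : ℝ × ℝ) ∈ T) (hne : b ≠ e) :
    ENNReal.ofReal ((max b e - min b e) / 2) ≤
      ∫⁻ y in Ioc (min b e) (max b e), volume {x : ℝ | (x, y) ∈ T} := by
  have hEB : e - b ≠ 0 := sub_ne_zero.mpr (Ne.symm hne)
  -- pointwise bound on slices
  have key : ∀ y ∈ Ioc (min b e) (max b e),
      ENNReal.ofReal ((e - y) / (e - b)) ≤ volume {x : ℝ | (x, y) ∈ T} := by
    intro y hy
    set t : ℝ := (y - b) / (e - b) with ht
    have ht01 : 0 ≤ t ∧ t ≤ 1 := by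
      rcases lt_or_gt_of_ne hne with hlt | hlt
      · rw [min_eq_left hlt.le, max_eq_right hlt.le] at hy
        constructor
        · exact div_nonneg (by linarith [hy.1]) (by linarith)
        · exact (div_le_one (by linarith)).mpr (by linarith [hy.2])
      · rw [min_eq_right hlt.le, max_eq_left hlt.le] at hy
        constructor
        · rw [ht, div_nonneg_iff]
          right
          constructor <;> linarith [hy.2]
        · rw [ht, div_le_one_iff]
          right; right
          constructor <;> linarith [hy.1]
    have hy2 : (1 - t) * b + t * e = y := by
      have h' : t * (e - b) = y - b := div_mul_cancel₀ _ hEB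
      linarith [h']
    have hPmem := hconv hA hC (by linarith [ht01.2] : (0:ℝ) ≤ 1 - t) ht01.1 (by ring)
    have hQmem := hconv hB hC (by linarith [ht01.2] : (0:ℝ) ≤ 1 - t) ht01.1 (by ring)
    have hP' : ((1 - t) • ((a, b) : ℝ × ℝ) + t • (c, e))
        = (((1 - t) * a + t * c, y) : ℝ × ℝ) := by
      ext <;> simp [hy2]
    have hQ' : ((1 - t) • ((a + 1, b) : ℝ × ℝ) + t • (c, e))
        = (((1 - t) * (a + 1) + t * c, y) : ℝ × ℝ) := by
      ext <;> simp [hy2]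
    rw [hP'] at hPmem
    rw [hQ'] at hQmem
    have := slice_lb hconv hPmem hQmem rfl
    simp only at this
    have h1t : (e - y) / (e - b) = 1 - t := by
      rw [ht, eq_sub_iff_add_eq, ← add_div, div_eq_one_iff_eq hEB]
      ring
    have harith : ((1 - t) * (a + 1) + t * c) - ((1 - t) * a + t * c) = 1 - t := by ring
    rw [h1t, ← harith]
    exact this
  -- integral computation
  have hcont : Continuous fun y : ℝ => (e - y) / (e - b) := by fun_prop
  have hint : IntegrableOn (fun y : ℝ => (e - y) / (e - b)) (Ioc (min b e) (max b e)) :=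
    hcont.integrableOn_Ioc
  have hnn : 0 ≤ᵐ[volume.restrict (Ioc (min b e) (max b e))]
      fun y : ℝ => (e - y) / (e - b) := by
    rw [Filter.EventuallyLE, ae_restrict_iff' measurableSet_Ioc]
    filter_upwards with y hy
    rcases lt_or_gt_of_ne hne with hlt | hlt
    · rw [min_eq_left hlt.le, max_eq_right hlt.le] at hy
      exact div_nonneg (by linarith [hy.2]) (by linarith)
    · rw [min_eq_right hlt.le, max_eq_left hlt.le] at hy
      exact div_nonneg_iff.mpr (Or.inr ⟨by linarith [hy.1], by linarith⟩)
  have hval : ∫ y in Ioc (min b e) (max b e), (e - y) / (e - b) = (max b e - min b e) / 2 := by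
    rw [← intervalIntegral.integral_of_le (min_le_max)]
    rcases lt_or_gt_of_ne hne with hlt | hlt
    · rw [min_eq_left hlt.le, max_eq_right hlt.le]
      simp_rw [div_eq_inv_mul _ (e - b)]
      rw [intervalIntegral.integral_const_mul]
      rw [intervalIntegral.integral_sub intervalIntegrable_const intervalIntegral.intervalIntegrable_id]
      simp only [intervalIntegral.integral_const, smul_eq_mul, integral_id]
      field_simp
      ring
    · rw [min_eq_right hlt.le, max_eq_left hlt.le]
      simp_rw [div_eq_inv_mul _ (e - b)]
      rw [intervalIntegral.integral_const_mul]
      rw [intervalIntegral.integral_sub intervalIntegrable_const intervalIntegral.intervalIntegrable_id]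
      simp only [intervalIntegral.integral_const, smul_eq_mul, integral_id]
      field_simp
      ring
  calc ENNReal.ofReal ((max b e - min b e) / 2)
      = ∫⁻ y in Ioc (min b e) (max b e), ENNReal.ofReal ((e - y) / (e - b)) := by
        rw [← ofReal_integral_eq_lintegral_ofReal hint hnn, hval]
    _ ≤ ∫⁻ y in Ioc (min b e) (max b e), volume {x : ℝ | (x, y) ∈ T} :=
        setLIntegral_mono' measurableSet_Ioc key

/-- Any convex body `T ⊂ ℝ²` containing a translate of the horizontal unit
segment and a translate of the vertical unit segment has area at least `1/2`. -/
theorem volume_ge_half_of_contains_unit_segments (T : Set (ℝ × ℝ))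
    (hconv : Convex ℝ T) (hcomp : IsCompact T) (hint : (interior T).Nonempty)
    (hH : ∃ t : ℝ × ℝ, (fun p => p + t) '' segment ℝ ((0:ℝ), (0:ℝ)) ((1:ℝ), (0:ℝ)) ⊆ T)
    (hV : ∃ t : ℝ × ℝ, (fun p => p + t) '' segment ℝ ((0:ℝ), (0:ℝ)) ((0:ℝ), (1:ℝ)) ⊆ T) :
    1/2 ≤ volume T := by
  obtain ⟨tH, hH⟩ := hH
  obtain ⟨tV, hV⟩ := hV
  set a := tH.1; set b := tH.2; set c := tV.1; set d := tV.2
  have hA : ((a, b) : ℝ × ℝ) ∈ T := hH ⟨(0, 0), left_mem_segment ℝ _ _, by simp [Prod.ext_iff]; exact ⟨rfl, rfl⟩⟩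
  have hB : ((a + 1, b) : ℝ × ℝ) ∈ T :=
    hH ⟨(1, 0), right_mem_segment ℝ _ _, by simp [Prod.ext_iff]; exact ⟨add_comm _ _, rfl⟩⟩
  have hC : ((c, d) : ℝ × ℝ) ∈ T := hV ⟨(0, 0), left_mem_segment ℝ _ _, by simp [Prod.ext_iff]; exact ⟨rfl, rfl⟩⟩
  have hD : ((c, d + 1) : ℝ × ℝ) ∈ T :=
    hV ⟨(0, 1), right_mem_segment ℝ _ _, by simp [Prod.ext_iff]; exact ⟨rfl, add_comm _ _⟩⟩
  have hTm : MeasurableSet T := hcomp.measurableSet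
  have hslice : volume T = ∫⁻ y, volume {x : ℝ | (x, y) ∈ T} := by
    rw [show (volume : Measure (ℝ × ℝ)) = (volume : Measure ℝ).prod volume from rfl,
      Measure.prod_apply_symm hTm]
    rfl
  have hmeas : Measurable fun y => volume {x : ℝ | (x, y) ∈ T} :=
    measurable_measure_prodMk_right hTm
  rw [hslice]
  rcases le_or_gt (d + 1) b with hcase | hcase
  · -- horizontal segment above vertical segment: use apex (c, d)
    have hne : b ≠ d := by intro h; linarith
    have h1 := tri_lb hconv hA hB hC hne
    rw [min_eq_right (by linarith), max_eq_left (by linarith)] at h1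
    calc (1/2 : ℝ≥0∞) ≤ ENNReal.ofReal ((b - d) / 2) := by
          rw [show (1/2 : ℝ≥0∞) = ENNReal.ofReal (1/2) by
            rw [ENNReal.ofReal_div_of_pos] <;> simp]
          exact ENNReal.ofReal_le_ofReal (by linarith)
      _ ≤ ∫⁻ y in Ioc d b, volume {x : ℝ | (x, y) ∈ T} := h1
      _ ≤ ∫⁻ y, volume {x : ℝ | (x, y) ∈ T} := setLIntegral_le_lintegral _ _
  · rcases le_or_gt b d with hcase2 | hcase2
    · -- horizontal segment below: use apex (c, d+1)
        have hne : b ≠ d + 1 := by intro h; linarith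
        have h1 := tri_lb hconv hA hB hD hne
        rw [min_eq_left (by linarith), max_eq_right (by linarith)] at h1
        calc (1/2 : ℝ≥0∞) ≤ ENNReal.ofReal ((d + 1 - b) / 2) := by
              rw [show (1/2 : ℝ≥0∞) = ENNReal.ofReal (1/2) by
                rw [ENNReal.ofReal_div_of_pos] <;> simp]
              exact ENNReal.ofReal_le_ofReal (by linarith)
          _ ≤ ∫⁻ y in Ioc b (d + 1), volume {x : ℝ | (x, y) ∈ T} := h1
          _ ≤ ∫⁻ y, volume {x : ℝ | (x, y) ∈ T} := setLIntegral_le_lintegral _ _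
    · -- d < b < d + 1 : two triangles
      have hne1 : b ≠ d := by intro h; linarith
      have hne2 : b ≠ d + 1 := by intro h; linarith
      have h1 := tri_lb hconv hA hB hC hne1
      rw [min_eq_right (by linarith), max_eq_left (by linarith)] at h1
      have h2 := tri_lb hconv hA hB hD hne2
      rw [min_eq_left (by linarith), max_eq_right (by linarith)] at h2
      have hdisj : Disjoint (Ioc d b) (Ioc b (d + 1)) := Ioc_disjoint_Ioc_of_le le_rfl
      have hunion : ∫⁻ y in Ioc d b ∪ Ioc b (d + 1), volume {x : ℝ | (x, y) ∈ T}
          = (∫⁻ y in Ioc d b, volume {x : ℝ | (x, y) ∈ T})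
            + ∫⁻ y in Ioc b (d + 1), volume {x : ℝ | (x, y) ∈ T} :=
        lintegral_union measurableSet_Ioc hdisj
      calc (1/2 : ℝ≥0∞)
          = ENNReal.ofReal ((b - d) / 2) + ENNReal.ofReal ((d + 1 - b) / 2) := by
            rw [← ENNReal.ofReal_add (by linarith) (by linarith)]
            rw [show (b - d) / 2 + (d + 1 - b) / 2 = 1/2 by ring]
            rw [ENNReal.ofReal_div_of_pos] <;> simp
        _ ≤ (∫⁻ y in Ioc d b, volume {x : ℝ | (x, y) ∈ T})
            + ∫⁻ y in Ioc b (d + 1), volume {x : ℝ | (x, y) ∈ T} := add_le_add h1 h2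
        _ = ∫⁻ y in Ioc d b ∪ Ioc b (d + 1), volume {x : ℝ | (x, y) ∈ T} := hunion.symm
        _ ≤ ∫⁻ y, volume {x : ℝ | (x, y) ∈ T} := setLIntegral_le_lintegral _ _
end

section
/- Let z ∈ (0,1). Let T₁ be the triangle with vertices (-1+z, z), (-1+z, -z), (1, 0), let T₂ be the triangle with vertices (1-z, z), (1-z, -z), (-1, 0), and let D be the segment from (0,-1) to (0,1). Then for all translation vectors s₁, s₂, s₃ ∈ ℝ², the area of conv{T₁+s₁, T₂+s₂, D+s₃} is at least 2, which is the area of the square conv{(0,-1),(1,0),(0,1),(-1,0)} = conv{T₁, T₂, D}. -/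
open Set MeasureTheory

lemma seg_vert {x c d y : ℝ} (h1 : c ≤ y) (h2 : y ≤ d) :
    ((x, y) : ℝ × ℝ) ∈ segment ℝ (x, c) (x, d) := by
  rcases eq_or_lt_of_le (h1.trans h2) with h | h
  · have hyc : y = c := le_antisymm (h ▸ h2) h1
    subst hyc
    exact left_mem_segment ℝ _ _
  · have hdc : (0:ℝ) < d - c := by linarith
    refine ⟨(d - y)/(d - c), (y - c)/(d - c), div_nonneg (by linarith) hdc.le, div_nonneg (by linarith) hdc.le, ?_, ?_⟩
    · field_simp; ring
    · have h0 : d - c ≠ 0 := ne_of_gt hdc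
      simp only [Prod.smul_mk, smul_eq_mul, Prod.mk_add_mk, Prod.mk.injEq]
      constructor <;> field_simp <;> ring

lemma volume_between {s : Set ℝ} (hs : MeasurableSet s) {F G : ℝ → ℝ}
    (hF : Continuous F) (hG : Continuous G) :
    volume {p : ℝ × ℝ | p.1 ∈ s ∧ p.2 ∈ Icc (F p.1) (G p.1)}
      = ∫⁻ x in s, ENNReal.ofReal (G x - F x) := by
  set T : Set (ℝ × ℝ) := {p | p.1 ∈ s ∧ p.2 ∈ Icc (F p.1) (G p.1)} with hT
  have hTm : MeasurableSet T := by
    have : T = (Prod.fst ⁻¹' s) ∩ ({p : ℝ × ℝ | F p.1 ≤ p.2} ∩ {p : ℝ × ℝ | p.2 ≤ G p.1}) := by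
      ext p; simp [hT, mem_Icc, and_assoc]
    rw [this]
    exact (hs.preimage measurable_fst).inter
      ((measurableSet_le (hF.measurable.comp measurable_fst) measurable_snd).inter
        (measurableSet_le measurable_snd (hG.measurable.comp measurable_fst)))
  rw [show (volume : Measure (ℝ × ℝ)) = (volume : Measure ℝ).prod volume from
        Measure.volume_eq_prod ℝ ℝ, Measure.prod_apply hTm, ← lintegral_indicator hs]
  congr 1
  funext x
  by_cases hxs : x ∈ s
  · have : Prod.mk x ⁻¹' T = Icc (F x) (G x) := by ext y; simp [hT, hxs]
    rw [this, Real.volume_Icc, indicator_of_mem hxs]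
  · have : Prod.mk x ⁻¹' T = ∅ := by ext y; simp [hT, hxs]
    rw [this, indicator_of_notMem hxs]; simp

lemma trap_le {K : Set (ℝ × ℝ)} (hK : Convex ℝ K)
    {x₁ x₂ c₁ d₁ c₂ d₂ : ℝ} (hx : x₁ ≤ x₂) (h1 : c₁ ≤ d₁) (h2 : c₂ ≤ d₂)
    (m1 : (x₁, c₁) ∈ K) (m2 : (x₁, d₁) ∈ K) (m3 : (x₂, c₂) ∈ K) (m4 : (x₂, d₂) ∈ K) :
    ENNReal.ofReal ((x₂ - x₁) * ((d₁ - c₁) + (d₂ - c₂)) / 2)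
      ≤ volume (K ∩ (Ioc x₁ x₂ ×ˢ (univ : Set ℝ))) := by
  rcases eq_or_lt_of_le hx with rfl | hlt
  · simp
  have hL0 : (0:ℝ) < x₂ - x₁ := by linarith
  set F : ℝ → ℝ := fun x => c₁ + (x - x₁) * ((c₂ - c₁) / (x₂ - x₁)) with hF
  set G : ℝ → ℝ := fun x => d₁ + (x - x₁) * ((d₂ - d₁) / (x₂ - x₁)) with hG
  set T : Set (ℝ × ℝ) := {p | p.1 ∈ Ioc x₁ x₂ ∧ p.2 ∈ Icc (F p.1) (G p.1)} with hT
  have hTK : T ⊆ K ∩ (Ioc x₁ x₂ ×ˢ (univ : Set ℝ)) := by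
    rintro ⟨x, y⟩ ⟨hx1, hy⟩
    refine ⟨?_, hx1, trivial⟩
    set lam := (x - x₁) / (x₂ - x₁) with hlam
    have hxI : x₁ < x ∧ x ≤ x₂ := hx1
    have hlam0 : 0 ≤ lam := div_nonneg (by linarith [hxI.1]) hL0.le
    have hlam1 : lam ≤ 1 := by
      rw [hlam, div_le_one hL0]; linarith [hxI.2]
    have hlow : ((x, F x) : ℝ × ℝ) ∈ K := by
      have := hK m1 m3 (by linarith : (0:ℝ) ≤ 1 - lam) hlam0 (by ring)
      convert this using 1
      simp only [Prod.smul_mk, smul_eq_mul, Prod.mk_add_mk, Prod.mk.injEq, hF, hlam]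
      constructor <;> field_simp <;> ring
    have hhigh : ((x, G x) : ℝ × ℝ) ∈ K := by
      have := hK m2 m4 (by linarith : (0:ℝ) ≤ 1 - lam) hlam0 (by ring)
      convert this using 1
      simp only [Prod.smul_mk, smul_eq_mul, Prod.mk_add_mk, Prod.mk.injEq, hG, hlam]
      constructor <;> field_simp <;> ring
    exact hK.segment_subset hlow hhigh (seg_vert hy.1 hy.2)
  refine le_trans ?_ (measure_mono hTK)
  rw [hT, volume_between measurableSet_Ioc (by fun_prop) (by fun_prop)]
  have hGF : ∀ x, G x - F x = (d₁ - c₁) + (x - x₁) * (((d₂ - c₂) - (d₁ - c₁)) / (x₂ - x₁)) := by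
    intro x; rw [hF, hG]; field_simp; ring
  have hint : ∫ x in Ioc x₁ x₂, (G x - F x) = (x₂ - x₁) * ((d₁ - c₁) + (d₂ - c₂)) / 2 := by
    rw [← intervalIntegral.integral_of_le hlt.le]
    have : (fun x => G x - F x)
        = fun x => (d₁ - c₁) + (x - x₁) * (((d₂ - c₂) - (d₁ - c₁)) / (x₂ - x₁)) := funext hGF
    rw [intervalIntegral.integral_congr (g := fun x =>
      (d₁ - c₁) + (x - x₁) * (((d₂ - c₂) - (d₁ - c₁)) / (x₂ - x₁))) (fun x _ => hGF x)]
    have h2' : (∫ x in x₁..x₂, ((d₁ - c₁) + (x - x₁) * (((d₂ - c₂) - (d₁ - c₁)) / (x₂ - x₁))))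
        = ∫ u in (x₁ - x₁)..(x₂ - x₁), ((d₁ - c₁) + u * (((d₂ - c₂) - (d₁ - c₁)) / (x₂ - x₁))) := by
      rw [← intervalIntegral.integral_comp_sub_right
        (fun u => (d₁ - c₁) + u * (((d₂ - c₂) - (d₁ - c₁)) / (x₂ - x₁))) x₁]
    rw [h2', sub_self]
    rw [intervalIntegral.integral_add (intervalIntegrable_const)
      ((intervalIntegral.intervalIntegrable_id).mul_const _)]
    rw [intervalIntegral.integral_const, intervalIntegral.integral_mul_const, integral_id]
    field_simp
    ring
  have hnn : 0 ≤ᵐ[volume.restrict (Ioc x₁ x₂)] fun x => G x - F x := by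
    filter_upwards [ae_restrict_mem measurableSet_Ioc] with x hxI
    simp only [Pi.zero_apply]
    rw [hGF]
    rcases hxI with ⟨ha, hb⟩
    have h3 : 0 ≤ (x - x₁) / (x₂ - x₁) := div_nonneg (by linarith) hL0.le
    have h4 : (x - x₁) / (x₂ - x₁) ≤ 1 := by rw [div_le_one hL0]; linarith
    have : (x - x₁) * (((d₂ - c₂) - (d₁ - c₁)) / (x₂ - x₁))
        = ((x - x₁) / (x₂ - x₁)) * ((d₂ - c₂) - (d₁ - c₁)) := by ring
    rw [this]
    nlinarith
  have hInt : IntegrableOn (fun x => G x - F x) (Ioc x₁ x₂) := by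
    apply Continuous.integrableOn_Ioc
    fun_prop
  rw [← ofReal_integral_eq_lintegral_ofReal hInt hnn, hint]

lemma strip_disjoint {a b c d : ℝ} (h : b ≤ c) :
    Disjoint ((Ioc a b ×ˢ (univ : Set ℝ))) ((Ioc c d ×ˢ (univ : Set ℝ))) := by
  rw [Set.disjoint_left]
  rintro ⟨x, y⟩ ⟨hx1, -⟩ ⟨hx2, -⟩
  exact absurd hx2.1 (by linarith [hx1.2])

lemma chain4 {K : Set (ℝ × ℝ)} (hK : Convex ℝ K)
    {x₀ x₁ x₂ x₃ x₄ c₀ d₀ c₁ d₁ c₂ d₂ c₃ d₃ c₄ d₄ : ℝ}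
    (h01 : x₀ ≤ x₁) (h12 : x₁ ≤ x₂) (h23 : x₂ ≤ x₃) (h34 : x₃ ≤ x₄)
    (e₀ : c₀ ≤ d₀) (e₁ : c₁ ≤ d₁) (e₂ : c₂ ≤ d₂) (e₃ : c₃ ≤ d₃) (e₄ : c₄ ≤ d₄)
    (m₀ : (x₀, c₀) ∈ K) (m₀' : (x₀, d₀) ∈ K) (m₁ : (x₁, c₁) ∈ K) (m₁' : (x₁, d₁) ∈ K)
    (m₂ : (x₂, c₂) ∈ K) (m₂' : (x₂, d₂) ∈ K) (m₃ : (x₃, c₃) ∈ K) (m₃' : (x₃, d₃) ∈ K)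
    (m₄ : (x₄, c₄) ∈ K) (m₄' : (x₄, d₄) ∈ K) :
    ENNReal.ofReal ((x₁ - x₀) * ((d₀ - c₀) + (d₁ - c₁)) / 2
      + (x₂ - x₁) * ((d₁ - c₁) + (d₂ - c₂)) / 2
      + (x₃ - x₂) * ((d₂ - c₂) + (d₃ - c₃)) / 2
      + (x₄ - x₃) * ((d₃ - c₃) + (d₄ - c₄)) / 2) ≤ volume K := by
  set S₀ := K ∩ (Ioc x₀ x₁ ×ˢ (univ : Set ℝ)) with hS₀
  set S₁ := K ∩ (Ioc x₁ x₂ ×ˢ (univ : Set ℝ)) with hS₁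
  set S₂ := K ∩ (Ioc x₂ x₃ ×ˢ (univ : Set ℝ)) with hS₂
  set S₃ := K ∩ (Ioc x₃ x₄ ×ˢ (univ : Set ℝ)) with hS₃
  have t0 := trap_le hK h01 e₀ e₁ m₀ m₀' m₁ m₁'
  have t1 := trap_le hK h12 e₁ e₂ m₁ m₁' m₂ m₂'
  have t2 := trap_le hK h23 e₂ e₃ m₂ m₂' m₃ m₃'
  have t3 := trap_le hK h34 e₃ e₄ m₃ m₃' m₄ m₄'
  have hn : ∀ A : Set (ℝ × ℝ), NullMeasurableSet (K ∩ A) volume → True := fun _ _ => trivial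
  have hnm : ∀ (a b : ℝ), NullMeasurableSet (K ∩ (Ioc a b ×ˢ (univ : Set ℝ))) volume := by
    intro a b
    exact (hK.nullMeasurableSet volume).inter
      ((measurableSet_Ioc.prod MeasurableSet.univ).nullMeasurableSet)
  have d01 : Disjoint S₀ S₁ :=
    (strip_disjoint le_rfl).mono inter_subset_right inter_subset_right
  have d02 : Disjoint S₀ S₂ :=
    (strip_disjoint h12).mono inter_subset_right inter_subset_right
  have d03 : Disjoint S₀ S₃ :=
    (strip_disjoint (h12.trans h23)).mono inter_subset_right inter_subset_right
  have d12 : Disjoint S₁ S₂ :=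
    (strip_disjoint le_rfl).mono inter_subset_right inter_subset_right
  have d13 : Disjoint S₁ S₃ :=
    (strip_disjoint h23).mono inter_subset_right inter_subset_right
  have d23 : Disjoint S₂ S₃ :=
    (strip_disjoint le_rfl).mono inter_subset_right inter_subset_right
  have hsum : volume S₀ + volume S₁ + volume S₂ + volume S₃
      = volume (S₀ ∪ S₁ ∪ S₂ ∪ S₃) := by
    have n1 : NullMeasurableSet S₁ volume := hnm _ _
    have n2 : NullMeasurableSet S₂ volume := hnm _ _
    have n3 : NullMeasurableSet S₃ volume := hnm _ _
    rw [measure_union₀ n3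
      ((disjoint_union_left.mpr ⟨disjoint_union_left.mpr ⟨d03, d13⟩, d23⟩).aedisjoint),
      measure_union₀ n2 ((disjoint_union_left.mpr ⟨d02, d12⟩).aedisjoint),
      measure_union₀ n1 d01.aedisjoint]
  calc ENNReal.ofReal _ ≤ ENNReal.ofReal ((x₁ - x₀) * ((d₀ - c₀) + (d₁ - c₁)) / 2)
        + ENNReal.ofReal ((x₂ - x₁) * ((d₁ - c₁) + (d₂ - c₂)) / 2)
        + ENNReal.ofReal ((x₃ - x₂) * ((d₂ - c₂) + (d₃ - c₃)) / 2)
        + ENNReal.ofReal ((x₄ - x₃) * ((d₃ - c₃) + (d₄ - c₄)) / 2) := by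
          refine le_trans ENNReal.ofReal_add_le (add_le_add ?_ le_rfl)
          refine le_trans ENNReal.ofReal_add_le (add_le_add ?_ le_rfl)
          exact ENNReal.ofReal_add_le
    _ ≤ volume S₀ + volume S₁ + volume S₂ + volume S₃ :=
          add_le_add (add_le_add (add_le_add t0 t1) t2) t3
    _ = volume (S₀ ∪ S₁ ∪ S₂ ∪ S₃) := hsum
    _ ≤ volume K := by
          apply measure_mono
          intro p hp
          rcases hp with ((h | h) | h) | h <;> exact h.1

lemma diamond_convex : Convex ℝ {p : ℝ × ℝ | |p.1| + |p.2| ≤ 1} := by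
  intro p hp q hq a b ha hb hab
  simp only [mem_setOf_eq] at hp hq ⊢
  have h1 : |(a • p + b • q).1| ≤ a * |p.1| + b * |q.1| := by
    simp only [Prod.fst_add, Prod.smul_fst, smul_eq_mul]
    calc |a * p.1 + b * q.1| ≤ |a * p.1| + |b * q.1| := abs_add_le _ _
      _ = a * |p.1| + b * |q.1| := by rw [abs_mul, abs_mul, abs_of_nonneg ha, abs_of_nonneg hb]
  have h2 : |(a • p + b • q).2| ≤ a * |p.2| + b * |q.2| := by
    simp only [Prod.snd_add, Prod.smul_snd, smul_eq_mul]
    calc |a * p.2 + b * q.2| ≤ |a * p.2| + |b * q.2| := abs_add_le _ _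
      _ = a * |p.2| + b * |q.2| := by rw [abs_mul, abs_mul, abs_of_nonneg ha, abs_of_nonneg hb]
  nlinarith [abs_nonneg p.1, abs_nonneg p.2, abs_nonneg q.1, abs_nonneg q.2]

lemma sq_eq : convexHull ℝ {((0:ℝ), (-1:ℝ)), (1, 0), (0, 1), (-1, 0)}
    = {p : ℝ × ℝ | |p.1| + |p.2| ≤ 1} := by
  apply Subset.antisymm
  · apply convexHull_min _ diamond_convex
    intro x hx
    simp only [mem_insert_iff, mem_singleton_iff] at hx
    rcases hx with rfl | rfl | rfl | rfl <;> norm_num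
  · rintro ⟨x, y⟩ h
    simp only [mem_setOf_eq] at h
    have hxy1 : y ≤ 1 - |x| := by cases abs_cases y <;> linarith
    have hxy2 : -(1 - |x|) ≤ y := by cases abs_cases y <;> linarith
    rcases le_or_gt 0 x with hx | hx
    · have hax : |x| = x := abs_of_nonneg hx
      have hmem := (convex_convexHull ℝ {((0:ℝ), (-1:ℝ)), (1, 0), (0, 1), (-1, 0)}).sum_mem
        (t := (Finset.univ : Finset (Fin 3)))
        (w := ![x, (1 - x + y)/2, (1 - x - y)/2])
        (z := ![((1:ℝ), (0:ℝ)), (0, 1), (0, -1)])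
        (by intro i _; fin_cases i <;> simp <;> linarith [hxy1, hxy2, hax.symm ▸ hxy1])
        (by simp [Fin.sum_univ_three]; ring)
        (by intro i _; fin_cases i <;> · apply subset_convexHull; simp)
      convert hmem using 1
      simp only [Fin.sum_univ_three]
      simp only [Matrix.cons_val_zero, Matrix.cons_val_one, Matrix.head_cons,
        Matrix.cons_val_two, Matrix.tail_cons, Prod.smul_mk, smul_eq_mul, Prod.mk_add_mk,
        Prod.mk.injEq]
      constructor <;> ring
    · have hax : |x| = -x := abs_of_neg hx
      have hmem := (convex_convexHull ℝ {((0:ℝ), (-1:ℝ)), (1, 0), (0, 1), (-1, 0)}).sum_mem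
        (t := (Finset.univ : Finset (Fin 3)))
        (w := ![-x, (1 + x + y)/2, (1 + x - y)/2])
        (z := ![((-1:ℝ), (0:ℝ)), (0, 1), (0, -1)])
        (by intro i _; fin_cases i <;> simp <;> linarith)
        (by simp [Fin.sum_univ_three]; ring)
        (by intro i _; fin_cases i <;> · apply subset_convexHull; simp)
      convert hmem using 1
      simp only [Fin.sum_univ_three]
      simp only [Matrix.cons_val_zero, Matrix.cons_val_one, Matrix.head_cons,
        Matrix.cons_val_two, Matrix.tail_cons, Prod.smul_mk, smul_eq_mul, Prod.mk_add_mk,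
        Prod.mk.injEq]
      constructor <;> ring

lemma abs_int : ∫ x in (-1:ℝ)..1, (2 - 2*|x|) = 2 := by
  have hc : Continuous (fun x : ℝ => 2 - 2*|x|) := by fun_prop
  have hi1 : IntervalIntegrable (fun x : ℝ => 2 - 2*|x|) volume (-1) 0 :=
    hc.intervalIntegrable _ _
  have hi2 : IntervalIntegrable (fun x : ℝ => 2 - 2*|x|) volume 0 1 :=
    hc.intervalIntegrable _ _
  rw [← intervalIntegral.integral_add_adjacent_intervals hi1 hi2]
  have e1 : ∫ x in (-1:ℝ)..0, (2 - 2*|x|) = ∫ x in (-1:ℝ)..0, (2 + 2*x) := by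
    apply intervalIntegral.integral_congr
    intro x hx
    rw [uIcc_of_le (by norm_num)] at hx
    show 2 - 2*|x| = 2 + 2*x
    rw [abs_of_nonpos hx.2]; ring
  have e2 : ∫ x in (0:ℝ)..1, (2 - 2*|x|) = ∫ x in (0:ℝ)..1, (2 - 2*x) := by
    apply intervalIntegral.integral_congr
    intro x hx
    rw [uIcc_of_le (by norm_num)] at hx
    show 2 - 2*|x| = 2 - 2*x
    rw [abs_of_nonneg hx.1]
  rw [e1, e2]
  have c1 : ∫ x in (-1:ℝ)..0, (2 + 2*x) = 1 := by
    rw [intervalIntegral.integral_add (intervalIntegrable_const)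
      ((intervalIntegral.intervalIntegrable_id).const_mul 2),
      intervalIntegral.integral_const, intervalIntegral.integral_const_mul, integral_id]
    norm_num
  have c2 : ∫ x in (0:ℝ)..1, (2 - 2*x) = 1 := by
    rw [intervalIntegral.integral_sub (intervalIntegrable_const)
      ((intervalIntegral.intervalIntegrable_id).const_mul 2),
      intervalIntegral.integral_const, intervalIntegral.integral_const_mul, integral_id]
    norm_num
  rw [c1, c2]; norm_num

lemma part2 : volume (convexHull ℝ {((0:ℝ), (-1:ℝ)), (1, 0), (0, 1), (-1, 0)}) = 2 := by
  set sq := convexHull ℝ {((0:ℝ), (-1:ℝ)), (1, 0), (0, 1), (-1, 0)} with hsq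
  have msq : ∀ p ∈ ({((0:ℝ), (-1:ℝ)), (1, 0), (0, 1), (-1, 0)} : Set (ℝ × ℝ)), p ∈ sq :=
    fun p hp => subset_convexHull ℝ _ hp
  have hK : Convex ℝ sq := convex_convexHull ℝ _
  have m1 : ((0:ℝ), (-1:ℝ)) ∈ sq := msq _ (by simp)
  have m2 : ((1:ℝ), (0:ℝ)) ∈ sq := msq _ (by simp)
  have m3 : ((0:ℝ), (1:ℝ)) ∈ sq := msq _ (by simp)
  have m4 : ((-1:ℝ), (0:ℝ)) ∈ sq := msq _ (by simp)
  have hlow : ENNReal.ofReal 2 ≤ volume sq := by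
    have := chain4 hK (x₀ := -1) (x₁ := -1) (x₂ := 0) (x₃ := 1) (x₄ := 1)
      (c₀ := 0) (d₀ := 0) (c₁ := 0) (d₁ := 0) (c₂ := -1) (d₂ := 1)
      (c₃ := 0) (d₃ := 0) (c₄ := 0) (d₄ := 0)
      le_rfl (by norm_num) (by norm_num) le_rfl
      le_rfl le_rfl (by norm_num) le_rfl le_rfl
      m4 m4 m4 m4 m1 m3 m2 m2 m2 m2
    convert this using 2
    norm_num
  have hup : volume sq ≤ ENNReal.ofReal 2 := by
    have hsub : sq ⊆ {p : ℝ × ℝ | p.1 ∈ Icc (-1:ℝ) 1 ∧ p.2 ∈ Icc (|p.1| - 1) (1 - |p.1|)} := by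
      rw [hsq, sq_eq]
      rintro ⟨x, y⟩ h
      simp only [mem_setOf_eq] at h ⊢
      refine ⟨⟨?_, ?_⟩, ?_, ?_⟩ <;>
        [ (cases abs_cases x <;> linarith [abs_nonneg y]);
          (cases abs_cases x <;> linarith [abs_nonneg y]);
          (cases abs_cases y <;> linarith);
          (cases abs_cases y <;> linarith)]
    refine le_trans (measure_mono hsub) ?_
    rw [volume_between (F := fun x : ℝ => |x| - 1) (G := fun x : ℝ => 1 - |x|) measurableSet_Icc (by fun_prop) (by fun_prop)]
    have hInt : IntegrableOn (fun x : ℝ => (1 - |x|) - (|x| - 1)) (Icc (-1) 1) :=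
      Continuous.integrableOn_Icc (by fun_prop)
    have hnn : 0 ≤ᵐ[volume.restrict (Icc (-1:ℝ) 1)] fun x => (1 - |x|) - (|x| - 1) := by
      filter_upwards [ae_restrict_mem measurableSet_Icc] with x hxI
      simp only [Pi.zero_apply]
      cases abs_cases x <;> cases' hxI with h1 h2 <;> linarith
    rw [← ofReal_integral_eq_lintegral_ofReal hInt hnn]
    apply ENNReal.ofReal_le_ofReal
    have : ∫ x in Icc (-1:ℝ) 1, ((1 - |x|) - (|x| - 1)) = ∫ x in (-1:ℝ)..1, (2 - 2*|x|) := by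
      rw [integral_Icc_eq_integral_Ioc, ← intervalIntegral.integral_of_le (by norm_num : (-1:ℝ) ≤ 1)]
      apply intervalIntegral.integral_congr
      intro x _; ring
    rw [this, abs_int]
  have h2 : (2 : ENNReal) = ENNReal.ofReal 2 := by norm_num
  rw [h2]
  exact le_antisymm hup hlow

lemma part3 (z : ℝ) (hz0 : 0 < z) (hz1 : z < 1) :
    convexHull ℝ {((0:ℝ), (-1:ℝ)), (1, 0), (0, 1), (-1, 0)}
      = convexHull ℝ ((convexHull ℝ {((-1 + z : ℝ), z), (-1 + z, -z), (1, 0)})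
          ∪ (convexHull ℝ {((1 - z : ℝ), z), (1 - z, -z), (-1, 0)})
          ∪ (segment ℝ ((0:ℝ), -1) ((0:ℝ), 1))) := by
  set T₁ : Set (ℝ × ℝ) := convexHull ℝ {((-1 + z : ℝ), z), (-1 + z, -z), (1, 0)} with hT₁
  set T₂ : Set (ℝ × ℝ) := convexHull ℝ {((1 - z : ℝ), z), (1 - z, -z), (-1, 0)} with hT₂
  set D : Set (ℝ × ℝ) := segment ℝ ((0:ℝ), -1) ((0:ℝ), 1) with hD
  apply Subset.antisymm
  · apply convexHull_min _ (convex_convexHull ℝ _)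
    intro x hx
    simp only [mem_insert_iff, mem_singleton_iff] at hx
    have hsub : T₁ ∪ T₂ ∪ D ⊆ convexHull ℝ (T₁ ∪ T₂ ∪ D) := subset_convexHull ℝ _
    rcases hx with rfl | rfl | rfl | rfl
    · exact hsub (Or.inr (left_mem_segment ℝ _ _))
    · exact hsub (Or.inl (Or.inl (subset_convexHull ℝ _ (by simp))))
    · exact hsub (Or.inr (right_mem_segment ℝ _ _))
    · exact hsub (Or.inl (Or.inr (subset_convexHull ℝ _ (by simp))))
  · apply convexHull_min _ (convex_convexHull ℝ _)
    rw [sq_eq]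
    have habs1 : |(-1 + z : ℝ)| = 1 - z := by rw [abs_of_nonpos (by linarith)]; ring
    have habs2 : |(1 - z : ℝ)| = 1 - z := by rw [abs_of_nonneg (by linarith)]
    have habsz : |z| = z := abs_of_nonneg hz0.le
    rintro p ((hp | hp) | hp)
    · refine convexHull_min ?_ diamond_convex hp
      intro q hq
      simp only [mem_insert_iff, mem_singleton_iff] at hq
      have habsz' : |(-z : ℝ)| = z := by rw [abs_neg, habsz]
      rcases hq with rfl | rfl | rfl <;> simp only [mem_setOf_eq] <;>
        first
          | (rw [habs1, habsz]; linarith)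
          | (rw [habs1, habsz']; linarith)
          | norm_num
    · refine convexHull_min ?_ diamond_convex hp
      intro q hq
      simp only [mem_insert_iff, mem_singleton_iff] at hq
      have habsz' : |(-z : ℝ)| = z := by rw [abs_neg, habsz]
      rcases hq with rfl | rfl | rfl <;> simp only [mem_setOf_eq] <;>
        first
          | (rw [habs2, habsz]; linarith)
          | (rw [habs2, habsz']; linarith)
          | norm_num
    · rw [hD, ← convexHull_pair] at hp
      refine convexHull_min ?_ diamond_convex hp
      intro q hq
      simp only [mem_insert_iff, mem_singleton_iff] at hq
      rcases hq with rfl | rfl <;> norm_num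

lemma part1 (z : ℝ) (hz0 : 0 < z) (hz1 : z < 1) (s₁ s₂ s₃ : ℝ × ℝ) :
    (2 : ENNReal) ≤ volume (convexHull ℝ
      (((fun p => p + s₁) '' (convexHull ℝ {((-1 + z : ℝ), z), (-1 + z, -z), (1, 0)})) ∪
       ((fun p => p + s₂) '' (convexHull ℝ {((1 - z : ℝ), z), (1 - z, -z), (-1, 0)})) ∪
       ((fun p => p + s₃) '' (segment ℝ ((0:ℝ), -1) ((0:ℝ), 1))))) := by
  obtain ⟨p, q⟩ := s₁
  obtain ⟨r, v⟩ := s₂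
  obtain ⟨t, u⟩ := s₃
  set K : Set (ℝ × ℝ) := convexHull ℝ
      (((fun w => w + (p, q)) '' (convexHull ℝ {((-1 + z : ℝ), z), (-1 + z, -z), (1, 0)})) ∪
       ((fun w => w + (r, v)) '' (convexHull ℝ {((1 - z : ℝ), z), (1 - z, -z), (-1, 0)})) ∪
       ((fun w => w + (t, u)) '' (segment ℝ ((0:ℝ), -1) ((0:ℝ), 1)))) with hKdef
  have hK : Convex ℝ K := convex_convexHull ℝ _
  have mem1 : ∀ w ∈ ({((-1 + z : ℝ), z), (-1 + z, -z), (1, 0)} : Set (ℝ × ℝ)),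
      w + (p, q) ∈ K :=
    fun w hw => subset_convexHull ℝ _ (Or.inl (Or.inl ⟨w, subset_convexHull ℝ _ hw, rfl⟩))
  have mem2 : ∀ w ∈ ({((1 - z : ℝ), z), (1 - z, -z), (-1, 0)} : Set (ℝ × ℝ)),
      w + (r, v) ∈ K :=
    fun w hw => subset_convexHull ℝ _ (Or.inl (Or.inr ⟨w, subset_convexHull ℝ _ hw, rfl⟩))
  have mem3 : ∀ w ∈ segment ℝ ((0:ℝ), (-1:ℝ)) ((0:ℝ), (1:ℝ)), w + (t, u) ∈ K :=
    fun w hw => subset_convexHull ℝ _ (Or.inr ⟨w, hw, rfl⟩)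
  have mE1a : ((-1 + z + p, -z + q) : ℝ × ℝ) ∈ K := mem1 (-1 + z, -z) (by simp)
  have mE1b : ((-1 + z + p, z + q) : ℝ × ℝ) ∈ K := mem1 (-1 + z, z) (by simp)
  have mA1 : ((1 + p, 0 + q) : ℝ × ℝ) ∈ K := mem1 (1, 0) (by simp)
  have mE2a : ((1 - z + r, -z + v) : ℝ × ℝ) ∈ K := mem2 (1 - z, -z) (by simp)
  have mE2b : ((1 - z + r, z + v) : ℝ × ℝ) ∈ K := mem2 (1 - z, z) (by simp)
  have mA2 : ((-1 + r, 0 + v) : ℝ × ℝ) ∈ K := mem2 (-1, 0) (by simp)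
  have mDa : ((0 + t, -1 + u) : ℝ × ℝ) ∈ K := mem3 _ (left_mem_segment ℝ _ _)
  have mDb : ((0 + t, 1 + u) : ℝ × ℝ) ∈ K := mem3 _ (right_mem_segment ℝ _ _)
  have h2of : (2 : ENNReal) = ENNReal.ofReal 2 := by norm_num
  have hzz : -z + q ≤ z + q := by linarith
  have hzv : -z + v ≤ z + v := by linarith
  have huu : -1 + u ≤ 1 + u := by linarith
  rcases le_or_gt (1 + p) (0 + t) with hc1 | hc1
  · -- L1 : a₁ ≤ t, chain (e1, t)
    refine le_trans ?_ (chain4 hK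
      (le_refl (-1 + z + p)) (le_refl (-1 + z + p)) (le_refl (-1 + z + p))
      (show -1 + z + p ≤ 0 + t by linarith)
      hzz hzz hzz hzz huu
      mE1a mE1b mE1a mE1b mE1a mE1b mE1a mE1b mDa mDb)
    rw [h2of]
    apply ENNReal.ofReal_le_ofReal
    have k1 : (0:ℝ) ≤ ((0 + t) - (1 + p)) * z := by
      apply mul_nonneg _ hz0.le; linarith
    have k2 : (0:ℝ) ≤ z * (1 - z) := by
      apply mul_nonneg hz0.le; linarith
    nlinarith [k1, k2]
  rcases le_or_gt ((0 + t) + (2 - z)) (1 - z + r) with hc2 | hc2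
  · -- L2 : t + w ≤ e₂, chain (t, e2)
    refine le_trans ?_ (chain4 hK
      (le_refl (0 + t)) (le_refl (0 + t)) (le_refl (0 + t))
      (show 0 + t ≤ 1 - z + r by linarith)
      huu huu huu huu hzv
      mDa mDb mDa mDb mDa mDb mDa mDb mE2a mE2b)
    rw [h2of]
    apply ENNReal.ofReal_le_ofReal
    have k1 : (0:ℝ) ≤ (1 - z + r - (0 + t) - (2 - z)) * z := by
      apply mul_nonneg _ hz0.le; linarith
    have k2 : (0:ℝ) ≤ z * (1 - z) := by
      apply mul_nonneg hz0.le; linarith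
    nlinarith [k1, k2]
  rcases le_or_gt (1 + p) (1 - z + r) with hc3 | hc3
  · -- L3 : a₁ ≤ e₂, chain (e1, t, e2)
    refine le_trans ?_ (chain4 hK
      (le_refl (-1 + z + p)) (le_refl (-1 + z + p))
      (show -1 + z + p ≤ 0 + t by linarith)
      (show 0 + t ≤ 1 - z + r by linarith)
      hzz hzz hzz huu hzv
      mE1a mE1b mE1a mE1b mE1a mE1b mDa mDb mE2a mE2b)
    rw [h2of]
    apply ENNReal.ofReal_le_ofReal
    have k1 : (0:ℝ) ≤ ((1 - z + r) - (1 + p)) * z := by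
      apply mul_nonneg _ hz0.le; linarith
    have k2 : (0:ℝ) ≤ z * (1 - z) := by
      apply mul_nonneg hz0.le; linarith
    nlinarith [k1, k2]
  rcases le_or_gt z ((1 + p) - (1 - z + r)) with hc4 | hc4
  · -- L4 : z ≤ a₁ - e₂, chain (a2, t, a1)
    refine le_trans ?_ (chain4 hK
      (le_refl (-1 + r)) (le_refl (-1 + r))
      (show -1 + r ≤ 0 + t by linarith)
      (show 0 + t ≤ 1 + p by linarith)
      le_rfl le_rfl le_rfl huu le_rfl
      mA2 mA2 mA2 mA2 mA2 mA2 mDa mDb mA1 mA1)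
    rw [h2of]
    apply ENNReal.ofReal_le_ofReal
    nlinarith
  rcases le_or_gt (0 + t) (1 - z + r) with hc5 | hc5
  · rcases le_or_gt (1 + p) ((0 + t) + (2 - z)) with hc6 | hc6
    · -- L5a : chain (a2, e1, t, e2, a1)
      refine le_trans ?_ (chain4 hK
        (show -1 + r ≤ -1 + z + p by linarith)
        (show -1 + z + p ≤ 0 + t by linarith)
        (show 0 + t ≤ 1 - z + r by linarith)
        (show 1 - z + r ≤ 1 + p by linarith)
        le_rfl hzz huu hzv le_rfl
        mA2 mA2 mE1a mE1b mDa mDb mE2a mE2b mA1 mA1)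
      rw [h2of]
      apply ENNReal.ofReal_le_ofReal
      have k1 : (0:ℝ) ≤ (1 - z) * (z - ((1 + p) - (1 - z + r))) := by
        apply mul_nonneg _ _ <;> linarith
      nlinarith [k1]
    · -- L5c : chain (a2, t, e2, a1)
      refine le_trans ?_ (chain4 hK
        (le_refl (-1 + r))
        (show -1 + r ≤ 0 + t by linarith)
        (show 0 + t ≤ 1 - z + r by linarith)
        (show 1 - z + r ≤ 1 + p by linarith)
        le_rfl le_rfl huu hzv le_rfl
        mA2 mA2 mA2 mA2 mDa mDb mE2a mE2b mA1 mA1)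
      rw [h2of]
      apply ENNReal.ofReal_le_ofReal
      have k1 : (0:ℝ) ≤ z * ((1 + p) - (0 + t) - 1) := by
        apply mul_nonneg hz0.le; linarith
      nlinarith [k1]
  · -- L5b : e₂ < t, chain (a2, e1, t, a1)
    refine le_trans ?_ (chain4 hK
      (show -1 + r ≤ -1 + z + p by linarith)
      (show -1 + z + p ≤ 0 + t by linarith)
      (show 0 + t ≤ 1 + p by linarith)
      (le_refl (1 + p))
      le_rfl hzz huu le_rfl le_rfl
      mA2 mA2 mE1a mE1b mDa mDb mA1 mA1 mA1 mA1)
    rw [h2of]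
    apply ENNReal.ofReal_le_ofReal
    have k1 : (0:ℝ) ≤ z * ((0 + t) - (1 - z + r)) := by
      apply mul_nonneg hz0.le; linarith
    have k2 : (0:ℝ) ≤ z * (1 - z) := by
      apply mul_nonneg hz0.le; linarith
    nlinarith [k1, k2]

/-- For `z ∈ (0,1)`, no arrangement of translates of the two triangles `T₁`, `T₂`
and the vertical segment `D` has convex hull of area smaller than `2`, the area
of the square `conv{(0,-1),(1,0),(0,1),(-1,0)} = conv{T₁ ∪ T₂ ∪ D}`. -/
theorem square_minimizes_cover_of_two_triangles_and_segment (z : ℝ)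
    (hz : z ∈ Ioo (0:ℝ) 1) :
    let T₁ : Set (ℝ × ℝ) := convexHull ℝ {(-1 + z, z), (-1 + z, -z), (1, 0)}
    let T₂ : Set (ℝ × ℝ) := convexHull ℝ {(1 - z, z), (1 - z, -z), (-1, 0)}
    let D : Set (ℝ × ℝ) := segment ℝ ((0:ℝ), -1) ((0:ℝ), 1)
    let sq : Set (ℝ × ℝ) := convexHull ℝ {((0:ℝ), (-1:ℝ)), (1, 0), (0, 1), (-1, 0)}
    (∀ s₁ s₂ s₃ : ℝ × ℝ,
      (2 : ENNReal) ≤ volume (convexHull ℝ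
        (((fun p => p + s₁) '' T₁) ∪ ((fun p => p + s₂) '' T₂) ∪ ((fun p => p + s₃) '' D)))) ∧
    volume sq = 2 ∧ sq = convexHull ℝ (T₁ ∪ T₂ ∪ D) := by
  obtain ⟨hz0, hz1⟩ := hz
  intro T₁ T₂ D sq
  exact ⟨fun s₁ s₂ s₃ => part1 z hz0 hz1 s₁ s₂ s₃, part2, part3 z hz0 hz1⟩
end

section
/- Let z ∈ (0,1), T₁ the triangle with vertices (-1+z, z), (-1+z, -z), (1, 0), T₂ the triangle with vertices (1-z, z), (1-z, -z), (-1, 0), and D the segment from (0,-1) to (0,1). If translates T₁+s₁, T₂+s₂, D+s₃ satisfy conv{T₁+s₁, T₂+s₂, D+s₃} having area exactly 2, then this convex hull is a translate of the square conv{(0,-1),(1,0),(0,1),(-1,0)}. -/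
open Set MeasureTheory


lemma strip_vol (K : Set (ℝ × ℝ)) (hK : Convex ℝ K) {x₁ x₂ b₁ t₁ b₂ t₂ : ℝ}
    (hx : x₁ ≤ x₂) (hm1 : (x₁, b₁) ∈ K) (hm2 : (x₁, t₁) ∈ K) (hm3 : (x₂, b₂) ∈ K)
    (hm4 : (x₂, t₂) ∈ K) (h1 : b₁ ≤ t₁) (h2 : b₂ ≤ t₂) :
    ENNReal.ofReal ((x₂ - x₁) * ((t₁ - b₁) + (t₂ - b₂)) / 2)
      ≤ volume (K ∩ {p : ℝ × ℝ | x₁ < p.1 ∧ p.1 ≤ x₂}) := by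
  rcases eq_or_lt_of_le hx with rfl | hlt
  · simp
  have hne : x₂ - x₁ ≠ 0 := sub_ne_zero.mpr hlt.ne'
  set f : ℝ → ℝ := fun x => b₁ + (x - x₁) * (b₂ - b₁) / (x₂ - x₁) with hf
  set g : ℝ → ℝ := fun x => t₁ + (x - x₁) * (t₂ - t₁) / (x₂ - x₁) with hg
  have hsub : regionBetween f g (Ioo x₁ x₂) ⊆ K ∩ {p : ℝ × ℝ | x₁ < p.1 ∧ p.1 ≤ x₂} := by
    rintro ⟨x, y⟩ ⟨hxm, hym⟩
    simp only [mem_Ioo] at hxm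
    obtain ⟨hxm1, hxm2⟩ := hxm
    constructor
    · -- in K
      set s : ℝ := (x - x₁) / (x₂ - x₁) with hs
      have hs0 : 0 ≤ s := by apply div_nonneg <;> linarith
      have hs1 : s ≤ 1 := by rw [div_le_one (by linarith)]; linarith
      have hPb : ((x : ℝ), f x) ∈ K := by
        have h := hK hm1 hm3 (by linarith : (0:ℝ) ≤ 1 - s) hs0 (by ring)
        have he : ((x : ℝ), f x) = (1 - s) • ((x₁ : ℝ), b₁) + s • ((x₂ : ℝ), b₂) := by
          simp only [Prod.smul_mk, Prod.mk_add_mk, Prod.ext_iff, smul_eq_mul, hs, hf]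
          constructor <;> (field_simp; ring)
        rw [he]; exact h
      have hPt : ((x : ℝ), g x) ∈ K := by
        have h := hK hm2 hm4 (by linarith : (0:ℝ) ≤ 1 - s) hs0 (by ring)
        have he : ((x : ℝ), g x) = (1 - s) • ((x₁ : ℝ), t₁) + s • ((x₂ : ℝ), t₂) := by
          simp only [Prod.smul_mk, Prod.mk_add_mk, Prod.ext_iff, smul_eq_mul, hs, hg]
          constructor <;> (field_simp; ring)
        rw [he]; exact h
      have hy : y ∈ segment ℝ (f x) (g x) := by
        rw [segment_eq_Icc (le_of_lt (hym.1.trans hym.2))]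
        exact ⟨le_of_lt hym.1, le_of_lt hym.2⟩
      obtain ⟨a, b, ha, hb, hab, hy⟩ := hy
      have h := hK hPb hPt ha hb hab
      have he : ((x : ℝ), y) = a • ((x : ℝ), f x) + b • ((x : ℝ), g x) := by
        simp only [Prod.smul_mk, Prod.mk_add_mk, Prod.ext_iff, smul_eq_mul]
        constructor
        · linear_combination x * hab.symm
        · rw [← hy]; simp [smul_eq_mul]
      rw [he]; exact h
    · exact ⟨hxm1, le_of_lt hxm2⟩
  have hmono := measure_mono (μ := (volume : Measure (ℝ × ℝ))) hsub
  have hreg : volume (regionBetween f g (Ioo x₁ x₂))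
      = ENNReal.ofReal (∫ y in Ioo x₁ x₂, (g - f) y) := by
    rw [MeasureTheory.Measure.volume_eq_prod ℝ ℝ]
    apply volume_regionBetween_eq_integral
    · exact ((by fun_prop : Continuous f).integrableOn_Icc).mono_set Ioo_subset_Icc_self
    · exact ((by fun_prop : Continuous g).integrableOn_Icc).mono_set Ioo_subset_Icc_self
    · exact measurableSet_Ioo
    · intro x hx'
      obtain ⟨hx1, hx2⟩ := hx'
      have h3 : 0 ≤ (x - x₁) / (x₂ - x₁) := div_nonneg (by linarith) (by linarith)
      have h4 : (x - x₁) / (x₂ - x₁) ≤ 1 := by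
        rw [div_le_one (by linarith)]; linarith
      have key : 0 ≤ (1 - (x - x₁) / (x₂ - x₁)) * (t₁ - b₁)
          + ((x - x₁) / (x₂ - x₁)) * (t₂ - b₂) :=
        add_nonneg (mul_nonneg (by linarith) (by linarith))
          (mul_nonneg h3 (by linarith))
      have hde : g x - f x = (1 - (x - x₁) / (x₂ - x₁)) * (t₁ - b₁)
          + ((x - x₁) / (x₂ - x₁)) * (t₂ - b₂) := by
        simp only [hf, hg]; field_simp; ring
      rw [← hde] at key; linarith
  have hint : (∫ y in Ioo x₁ x₂, (g - f) y) = (x₂ - x₁) * ((t₁ - b₁) + (t₂ - b₂)) / 2 := by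
    rw [← MeasureTheory.integral_Ioc_eq_integral_Ioo,
      ← intervalIntegral.integral_of_le (le_of_lt hlt)]
    have : ∀ y : ℝ, (g - f) y = ((t₁ - b₁) + y * (((t₂ - b₂) - (t₁ - b₁)) / (x₂ - x₁))
        - x₁ * (((t₂ - b₂) - (t₁ - b₁)) / (x₂ - x₁))) := by
      intro y; simp only [Pi.sub_apply, hf, hg]; field_simp; ring
    simp only [this]
    rw [intervalIntegral.integral_sub (by apply Continuous.intervalIntegrable (by fun_prop)) (by apply Continuous.intervalIntegrable (by fun_prop)),
      intervalIntegral.integral_add (by apply Continuous.intervalIntegrable (by fun_prop)) (by apply Continuous.intervalIntegrable (by fun_prop)),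
      intervalIntegral.integral_const, intervalIntegral.integral_const]
    have hid : (∫ y in x₁..x₂, y * ((t₂ - b₂ - (t₁ - b₁)) / (x₂ - x₁)))
        = (x₂ ^ 2 - x₁ ^ 2) / 2 * ((t₂ - b₂ - (t₁ - b₁)) / (x₂ - x₁)) := by
      rw [intervalIntegral.integral_mul_const, integral_id]
    rw [hid]
    have hk : (t₂ - b₂ - (t₁ - b₁)) / (x₂ - x₁) * (x₂ - x₁) = t₂ - b₂ - (t₁ - b₁) :=
      div_mul_cancel₀ _ hne
    simp only [smul_eq_mul]
    linear_combination (x₂ - x₁) / 2 * hk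
  calc ENNReal.ofReal ((x₂ - x₁) * (t₁ - b₁ + (t₂ - b₂)) / 2)
      = volume (regionBetween f g (Ioo x₁ x₂)) := by rw [hreg, hint]
    _ ≤ _ := hmono

lemma four_strips (K : Set (ℝ × ℝ)) (hK : Convex ℝ K) (hKm : MeasurableSet K)
    {x₀ x₁ x₂ x₃ x₄ t₀ b₀ t₁ b₁ t₂ b₂ t₃ b₃ t₄ b₄ : ℝ}
    (h01 : x₀ ≤ x₁) (h12 : x₁ ≤ x₂) (h23 : x₂ ≤ x₃) (h34 : x₃ ≤ x₄)
    (m0b : (x₀, b₀) ∈ K) (m0t : (x₀, t₀) ∈ K)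
    (m1b : (x₁, b₁) ∈ K) (m1t : (x₁, t₁) ∈ K)
    (m2b : (x₂, b₂) ∈ K) (m2t : (x₂, t₂) ∈ K)
    (m3b : (x₃, b₃) ∈ K) (m3t : (x₃, t₃) ∈ K)
    (m4b : (x₄, b₄) ∈ K) (m4t : (x₄, t₄) ∈ K)
    (hbt0 : b₀ ≤ t₀) (hbt1 : b₁ ≤ t₁) (hbt2 : b₂ ≤ t₂) (hbt3 : b₃ ≤ t₃) (hbt4 : b₄ ≤ t₄) :
    ENNReal.ofReal ((x₁ - x₀) * ((t₀ - b₀) + (t₁ - b₁)) / 2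
      + (x₂ - x₁) * ((t₁ - b₁) + (t₂ - b₂)) / 2
      + (x₃ - x₂) * ((t₂ - b₂) + (t₃ - b₃)) / 2
      + (x₄ - x₃) * ((t₃ - b₃) + (t₄ - b₄)) / 2) ≤ volume K := by
  set S1 := K ∩ {p : ℝ × ℝ | x₀ < p.1 ∧ p.1 ≤ x₁} with hS1
  set S2 := K ∩ {p : ℝ × ℝ | x₁ < p.1 ∧ p.1 ≤ x₂} with hS2
  set S3 := K ∩ {p : ℝ × ℝ | x₂ < p.1 ∧ p.1 ≤ x₃} with hS3
  set S4 := K ∩ {p : ℝ × ℝ | x₃ < p.1 ∧ p.1 ≤ x₄} with hS4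
  have slabm : ∀ a b : ℝ, MeasurableSet {p : ℝ × ℝ | a < p.1 ∧ p.1 ≤ b} := fun a b =>
    ((measurableSet_lt measurable_const measurable_fst).inter
      (measurableSet_le measurable_fst measurable_const))
  have hm1 : MeasurableSet S1 := hKm.inter (slabm _ _)
  have hm2 : MeasurableSet S2 := hKm.inter (slabm _ _)
  have hm3 : MeasurableSet S3 := hKm.inter (slabm _ _)
  have hm4 : MeasurableSet S4 := hKm.inter (slabm _ _)
  have e1 := strip_vol K hK h01 m0b m0t m1b m1t hbt0 hbt1
  have e2 := strip_vol K hK h12 m1b m1t m2b m2t hbt1 hbt2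
  have e3 := strip_vol K hK h23 m2b m2t m3b m3t hbt2 hbt3
  have e4 := strip_vol K hK h34 m3b m3t m4b m4t hbt3 hbt4
  have n1 : (0:ℝ) ≤ (x₁ - x₀) * ((t₀ - b₀) + (t₁ - b₁)) / 2 := by
    apply div_nonneg (mul_nonneg (by linarith) (by linarith)) (by norm_num)
  have n2 : (0:ℝ) ≤ (x₂ - x₁) * ((t₁ - b₁) + (t₂ - b₂)) / 2 := by
    apply div_nonneg (mul_nonneg (by linarith) (by linarith)) (by norm_num)
  have n3 : (0:ℝ) ≤ (x₃ - x₂) * ((t₂ - b₂) + (t₃ - b₃)) / 2 := by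
    apply div_nonneg (mul_nonneg (by linarith) (by linarith)) (by norm_num)
  have n4 : (0:ℝ) ≤ (x₄ - x₃) * ((t₃ - b₃) + (t₄ - b₄)) / 2 := by
    apply div_nonneg (mul_nonneg (by linarith) (by linarith)) (by norm_num)
  have d12 : Disjoint S1 S2 := by
    rw [Set.disjoint_left]; rintro p ⟨-, -, hp1⟩ ⟨-, hp2, -⟩; exact absurd (hp1.trans_lt hp2) (lt_irrefl _)
  have d123 : Disjoint (S1 ∪ S2) S3 := by
    rw [Set.disjoint_left]; rintro p (⟨-, -, hp1⟩ | ⟨-, -, hp1⟩) ⟨-, hp2, -⟩ <;>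
      [exact absurd ((hp1.trans h12).trans_lt hp2) (lt_irrefl _);
       exact absurd (hp1.trans_lt hp2) (lt_irrefl _)]
  have d1234 : Disjoint (S1 ∪ S2 ∪ S3) S4 := by
    rw [Set.disjoint_left]; rintro p ((⟨-, -, hp1⟩ | ⟨-, -, hp1⟩) | ⟨-, -, hp1⟩) ⟨-, hp2, -⟩
    · exact absurd (((hp1.trans h12).trans h23).trans_lt hp2) (lt_irrefl _)
    · exact absurd ((hp1.trans h23).trans_lt hp2) (lt_irrefl _)
    · exact absurd (hp1.trans_lt hp2) (lt_irrefl _)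
  calc ENNReal.ofReal ((x₁ - x₀) * ((t₀ - b₀) + (t₁ - b₁)) / 2
      + (x₂ - x₁) * ((t₁ - b₁) + (t₂ - b₂)) / 2
      + (x₃ - x₂) * ((t₂ - b₂) + (t₃ - b₃)) / 2
      + (x₄ - x₃) * ((t₃ - b₃) + (t₄ - b₄)) / 2)
      = ENNReal.ofReal ((x₁ - x₀) * ((t₀ - b₀) + (t₁ - b₁)) / 2)
        + ENNReal.ofReal ((x₂ - x₁) * ((t₁ - b₁) + (t₂ - b₂)) / 2)
        + ENNReal.ofReal ((x₃ - x₂) * ((t₂ - b₂) + (t₃ - b₃)) / 2)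
        + ENNReal.ofReal ((x₄ - x₃) * ((t₃ - b₃) + (t₄ - b₄)) / 2) := by
        rw [← ENNReal.ofReal_add n1 n2, ← ENNReal.ofReal_add (by linarith) n3,
          ← ENNReal.ofReal_add (by linarith) n4]
    _ ≤ volume S1 + volume S2 + volume S3 + volume S4 := by
        gcongr <;> assumption
    _ = volume (S1 ∪ S2 ∪ S3 ∪ S4) := by
        rw [measure_union d1234 hm4, measure_union d123 hm3, measure_union d12 hm2]
    _ ≤ volume K := by
        apply measure_mono
        intro p hp
        rcases hp with ((⟨h, -⟩ | ⟨h, -⟩) | ⟨h, -⟩) | ⟨h, -⟩ <;> exact h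

lemma chordK {K : Set (ℝ × ℝ)} (hK : Convex ℝ K) {x1 y1 x2 y2 xx yy τ : ℝ}
    (h1 : (x1, y1) ∈ K) (h2 : (x2, y2) ∈ K) (h0 : 0 ≤ τ) (hτ : τ ≤ 1)
    (hx : xx = (1 - τ) * x1 + τ * x2) (hy : yy = (1 - τ) * y1 + τ * y2) :
    (xx, yy) ∈ K := by
  have h := hK h1 h2 (by linarith : (0:ℝ) ≤ 1 - τ) h0 (by ring)
  have he : ((xx : ℝ), yy) = (1 - τ) • ((x1 : ℝ), y1) + τ • ((x2 : ℝ), y2) := by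
    simp only [Prod.smul_mk, Prod.mk_add_mk, Prod.ext_iff, smul_eq_mul]
    exact ⟨hx, hy⟩
  rw [he]; exact h

set_option maxHeartbeats 2000000 in
lemma key (z a b c d : ℝ) (hz0 : 0 < z) (hz1 : z < 1) (K : Set (ℝ × ℝ))
    (hK : Convex ℝ K) (hKm : MeasurableSet K)
    (mA : ((1 + a : ℝ), b) ∈ K)
    (mE1p : ((-1 + z + a : ℝ), b + z) ∈ K) (mE1m : ((-1 + z + a : ℝ), b - z) ∈ K)
    (mB : ((-1 + c : ℝ), d) ∈ K)
    (mE2p : ((1 - z + c : ℝ), d + z) ∈ K) (mE2m : ((1 - z + c : ℝ), d - z) ∈ K)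
    (mN : ((0 : ℝ), (1 : ℝ)) ∈ K) (mS : ((0 : ℝ), (-1 : ℝ)) ∈ K)
    (hvol : volume K = 2) : a = 0 ∧ b = 0 ∧ c = 0 ∧ d = 0 := by
  have bnd : ∀ {x : ℝ}, ENNReal.ofReal x ≤ volume K → x ≤ 2 := by
    intro x hx
    rw [hvol, show (2 : ENNReal) = ENNReal.ofReal 2 by norm_num] at hx
    exact (ENNReal.ofReal_le_ofReal_iff (by norm_num)).mp hx
  -- case 1 : a ≤ -1 impossible
  rcases le_or_gt a (-1) with h1 | hA
  · exfalso
    have h := bnd (four_strips K hK hKm le_rfl le_rfl le_rfl (by linarith : (-1+z+a:ℝ) ≤ 0)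
      mE1m mE1p mE1m mE1p mE1m mE1p mE1m mE1p mS mN
      (by linarith) (by linarith) (by linarith) (by linarith) (by norm_num))
    linarith [h, mul_pos hz0 (by linarith : (0:ℝ) < 1 - z), mul_nonneg (by linarith : (0:ℝ) ≤ -1 - a) hz0.le]
  -- case 2 : c ≥ 1 impossible
  rcases le_or_gt 1 c with h2 | hC
  · exfalso
    have h := bnd (four_strips K hK hKm le_rfl le_rfl le_rfl (by linarith : (0:ℝ) ≤ 1 - z + c)
      mS mN mS mN mS mN mS mN mE2m mE2p
      (by norm_num) (by norm_num) (by norm_num) (by norm_num) (by linarith))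
    linarith [h, mul_pos hz0 (by linarith : (0:ℝ) < 1 - z), mul_nonneg (by linarith : (0:ℝ) ≤ c - 1) hz0.le]
  -- case 3 : a - c ≤ -z impossible
  rcases le_or_gt (a - c) (-z) with h3 | h3
  · exfalso
    have h := bnd (four_strips K hK hKm le_rfl le_rfl
      (by linarith : (-1+z+a:ℝ) ≤ 0) (by linarith : (0:ℝ) ≤ 1 - z + c)
      mE1m mE1p mE1m mE1p mE1m mE1p mS mN mE2m mE2p
      (by linarith) (by linarith) (by linarith) (by norm_num) (by linarith))
    linarith [h, mul_pos hz0 (by linarith : (0:ℝ) < 1 - z), mul_nonneg (by linarith : (0:ℝ) ≤ c - a - z) hz0.le]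
  -- case 4 : a > 1 - z impossible
  rcases lt_or_ge (1 - z) a with h4 | h4
  · exfalso
    rcases le_or_gt (z - 1) c with h4c | h4c
    · have h := bnd (four_strips K hK hKm (by linarith : (-1+c:ℝ) ≤ 0) le_rfl
        (by linarith : (0:ℝ) ≤ 1 - z + c) (by linarith : (1-z+c:ℝ) ≤ 1 + a)
        mB mB mS mN mS mN mE2m mE2p mA mA
        le_rfl (by norm_num) (by norm_num) (by linarith) le_rfl)
      linarith [h, mul_nonneg (by linarith : (0:ℝ) ≤ a - 1 + z) hz0.le, mul_pos hz0 (by linarith : (0:ℝ) < 1 - z)]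
    · have h := bnd (four_strips K hK hKm (by linarith : (-1+c:ℝ) ≤ 0) le_rfl le_rfl
        (by linarith : (0:ℝ) ≤ 1 + a)
        mB mB mS mN mS mN mS mN mA mA
        le_rfl (by norm_num) (by norm_num) (by norm_num) le_rfl)
      linarith [h]
  -- case 5 : c < z - 1 impossible
  rcases lt_or_ge c (z - 1) with h5 | h5
  · exfalso
    have h := bnd (four_strips K hK hKm (by linarith : (-1+c:ℝ) ≤ -1+z+a)
      (by linarith : (-1+z+a:ℝ) ≤ 0) (by linarith : (0:ℝ) ≤ 1 + a) le_rfl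
      mB mB mE1m mE1p mS mN mA mA mA mA
      le_rfl (by linarith) (by norm_num) le_rfl le_rfl)
    linarith [h, mul_nonneg (by linarith : (0:ℝ) ≤ z - 1 - c) hz0.le, mul_pos hz0 (by linarith : (0:ℝ) < 1 - z)]
  -- main case: -1 < a, c < 1, -z < a - c, a ≤ 1 - z, z - 1 ≤ c
  have hB1 := bnd (four_strips K hK hKm (by linarith : (-1+c:ℝ) ≤ 0) le_rfl le_rfl
    (by linarith : (0:ℝ) ≤ 1 + a) mB mB mS mN mS mN mS mN mA mA
    le_rfl (by norm_num) (by norm_num) (by norm_num) le_rfl)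
  have hB2 := bnd (four_strips K hK hKm (by linarith : (-1+c:ℝ) ≤ -1+z+a)
    (by linarith : (-1+z+a:ℝ) ≤ 0) (by linarith : (0:ℝ) ≤ 1-z+c)
    (by linarith : (1-z+c:ℝ) ≤ 1+a)
    mB mB mE1m mE1p mS mN mE2m mE2p mA mA
    le_rfl (by linarith) (by norm_num) (by linarith) le_rfl)
  have hac : a ≤ c := by linarith
  have hca : c ≤ a := by
    by_contra hcon
    push_neg at hcon
    linarith [hB2, mul_pos (by linarith : (0:ℝ) < c - a) (by linarith : (0:ℝ) < 1 - z)]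
  obtain rfl : a = c := le_antisymm hac hca
  -- 6c: a ≤ 0
  have h1a : (0:ℝ) < 1 - a := by linarith
  set τ := z / (1 - a) with hτdef
  have hτ0 : 0 ≤ τ := div_nonneg hz0.le h1a.le
  have hτ1 : τ ≤ 1 := by rw [hτdef, div_le_one h1a]; linarith
  have hcp : ((-1 + z + a : ℝ), (1 - τ) * d + τ * 1) ∈ K :=
    chordK hK mB mN hτ0 hτ1 (by rw [hτdef]; field_simp; ring) rfl
  have hcm : ((-1 + z + a : ℝ), (1 - τ) * d + τ * (-1)) ∈ K :=
    chordK hK mB mS hτ0 hτ1 (by rw [hτdef]; field_simp; ring) rfl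
  set t1 := max (b + z) ((1 - τ) * d + τ * 1) with ht1
  set bo1 := min (b - z) ((1 - τ) * d + τ * (-1)) with hbo1
  have mt1 : ((-1 + z + a : ℝ), t1) ∈ K := by
    rcases max_choice (b + z) ((1 - τ) * d + τ * 1) with h | h <;> rw [ht1, h]
    exacts [mE1p, hcp]
  have mbo1 : ((-1 + z + a : ℝ), bo1) ∈ K := by
    rcases min_choice (b - z) ((1 - τ) * d + τ * (-1)) with h | h <;> rw [hbo1, h]
    exacts [mE1m, hcm]
  have hbt1 : bo1 ≤ t1 := by
    have := min_le_left (b - z) ((1 - τ) * d + τ * (-1))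
    have := le_max_left (b + z) ((1 - τ) * d + τ * 1)
    linarith
  have hL1 : 2 * z ≤ (t1 - bo1) * (1 - a) := by
    have l1 : (1 - τ) * d + τ * 1 ≤ t1 := le_max_right _ _
    have l2 : bo1 ≤ (1 - τ) * d + τ * (-1) := min_le_right _ _
    have l3 : 2 * τ ≤ t1 - bo1 := by linarith
    have l4 := mul_le_mul_of_nonneg_right l3 h1a.le
    have l5 : 2 * τ * (1 - a) = 2 * z := by rw [hτdef]; field_simp
    linarith
  have h6c := bnd (four_strips K hK hKm (by linarith : (-1+a:ℝ) ≤ -1+z+a)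
    (by linarith : (-1+z+a:ℝ) ≤ 0) (by linarith : (0:ℝ) ≤ 1-z+a)
    (by linarith : (1-z+a:ℝ) ≤ 1+a)
    mB mB mbo1 mt1 mS mN mE2m mE2p mA mA
    le_rfl hbt1 (by norm_num) (by linarith) le_rfl)
  have ha0 : a ≤ 0 := by
    by_contra hcon
    push_neg at hcon
    linarith [h6c, hL1, mul_pos hcon hz0]
  -- 6d: 0 ≤ a
  have h1a' : (0:ℝ) < 1 + a := by linarith
  set σ := z / (1 + a) with hσdef
  have hσ0 : 0 ≤ σ := div_nonneg hz0.le h1a'.le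
  have hσ1 : σ ≤ 1 := by rw [hσdef, div_le_one h1a']; linarith
  have hdp : ((1 - z + a : ℝ), (1 - σ) * b + σ * 1) ∈ K :=
    chordK hK mA mN hσ0 hσ1 (by rw [hσdef]; field_simp; ring) rfl
  have hdm : ((1 - z + a : ℝ), (1 - σ) * b + σ * (-1)) ∈ K :=
    chordK hK mA mS hσ0 hσ1 (by rw [hσdef]; field_simp; ring) rfl
  set t2 := max (d + z) ((1 - σ) * b + σ * 1) with ht2
  set bo2 := min (d - z) ((1 - σ) * b + σ * (-1)) with hbo2
  have mt2 : ((1 - z + a : ℝ), t2) ∈ K := by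
    rcases max_choice (d + z) ((1 - σ) * b + σ * 1) with h | h <;> rw [ht2, h]
    exacts [mE2p, hdp]
  have mbo2 : ((1 - z + a : ℝ), bo2) ∈ K := by
    rcases min_choice (d - z) ((1 - σ) * b + σ * (-1)) with h | h <;> rw [hbo2, h]
    exacts [mE2m, hdm]
  have hbt2 : bo2 ≤ t2 := by
    have := min_le_left (d - z) ((1 - σ) * b + σ * (-1))
    have := le_max_left (d + z) ((1 - σ) * b + σ * 1)
    linarith
  have hL2 : 2 * z ≤ (t2 - bo2) * (1 + a) := by
    have l1 : (1 - σ) * b + σ * 1 ≤ t2 := le_max_right _ _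
    have l2 : bo2 ≤ (1 - σ) * b + σ * (-1) := min_le_right _ _
    have l3 : 2 * σ ≤ t2 - bo2 := by linarith
    have l4 := mul_le_mul_of_nonneg_right l3 h1a'.le
    have l5 : 2 * σ * (1 + a) = 2 * z := by rw [hσdef]; field_simp
    linarith
  have h6d := bnd (four_strips K hK hKm (by linarith : (-1+a:ℝ) ≤ -1+z+a)
    (by linarith : (-1+z+a:ℝ) ≤ 0) (by linarith : (0:ℝ) ≤ 1-z+a)
    (by linarith : (1-z+a:ℝ) ≤ 1+a)
    mB mB mE1m mE1p mS mN mbo2 mt2 mA mA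
    le_rfl (by linarith) (by norm_num) hbt2 le_rfl)
  have ha0' : 0 ≤ a := by
    by_contra hcon
    push_neg at hcon
    linarith [h6d, hL2, mul_pos (by linarith : (0:ℝ) < -a) hz0]
  obtain rfl : a = 0 := le_antisymm ha0 ha0'
  -- 6e: b = 0 and d = 0
  have hep : ((-1 + z + 0 : ℝ), (1 - z) * d + z * 1) ∈ K :=
    chordK hK mB mN hz0.le hz1.le (by ring) rfl
  have hem : ((-1 + z + 0 : ℝ), (1 - z) * d + z * (-1)) ∈ K :=
    chordK hK mB mS hz0.le hz1.le (by ring) rfl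
  have hfp : ((1 - z + 0 : ℝ), (1 - z) * b + z * 1) ∈ K :=
    chordK hK mA mN hz0.le hz1.le (by ring) rfl
  have hfm : ((1 - z + 0 : ℝ), (1 - z) * b + z * (-1)) ∈ K :=
    chordK hK mA mS hz0.le hz1.le (by ring) rfl
  set t1' := max (b + z) ((1 - z) * d + z * 1) with ht1'
  set bo1' := min (b - z) ((1 - z) * d + z * (-1)) with hbo1'
  set t2' := max (d + z) ((1 - z) * b + z * 1) with ht2'
  set bo2' := min (d - z) ((1 - z) * b + z * (-1)) with hbo2'
  have mt1' : ((-1 + z + 0 : ℝ), t1') ∈ K := by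
    rcases max_choice (b + z) ((1 - z) * d + z * 1) with h | h <;> rw [ht1', h]
    exacts [mE1p, hep]
  have mbo1' : ((-1 + z + 0 : ℝ), bo1') ∈ K := by
    rcases min_choice (b - z) ((1 - z) * d + z * (-1)) with h | h <;> rw [hbo1', h]
    exacts [mE1m, hem]
  have mt2' : ((1 - z + 0 : ℝ), t2') ∈ K := by
    rcases max_choice (d + z) ((1 - z) * b + z * 1) with h | h <;> rw [ht2', h]
    exacts [mE2p, hfp]
  have mbo2' : ((1 - z + 0 : ℝ), bo2') ∈ K := by
    rcases min_choice (d - z) ((1 - z) * b + z * (-1)) with h | h <;> rw [hbo2', h]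
    exacts [mE2m, hfm]
  have hg1 : bo1' ≤ t1' := by
    have := min_le_left (b - z) ((1 - z) * d + z * (-1))
    have := le_max_left (b + z) ((1 - z) * d + z * 1)
    linarith
  have hg2 : bo2' ≤ t2' := by
    have := min_le_left (d - z) ((1 - z) * b + z * (-1))
    have := le_max_left (d + z) ((1 - z) * b + z * 1)
    linarith
  have h6e := bnd (four_strips K hK hKm (by linarith : (-1+0:ℝ) ≤ -1+z+0)
    (by linarith : (-1+z+0:ℝ) ≤ 0) (by linarith : (0:ℝ) ≤ 1-z+0)
    (by linarith : (1-z+0:ℝ) ≤ 1+0)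
    mB mB mbo1' mt1' mS mN mbo2' mt2' mA mA
    le_rfl hg1 (by norm_num) hg2 le_rfl)
  have f1 : b + z ≤ t1' := le_max_left _ _
  have f2 : bo1' ≤ (1 - z) * d + z * (-1) := min_le_right _ _
  have f3 : (1 - z) * d + z * 1 ≤ t1' := le_max_right _ _
  have f4 : bo1' ≤ b - z := min_le_left _ _
  have g1 : d + z ≤ t2' := le_max_left _ _
  have g2 : bo2' ≤ (1 - z) * b + z * (-1) := min_le_right _ _
  have g3 : (1 - z) * b + z * 1 ≤ t2' := le_max_right _ _
  have g4 : bo2' ≤ d - z := min_le_left _ _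
  have hsum1 : z * (b + d) ≤ 0 := by linarith [h6e, f1, f2, g1, g2]
  have hsum2 : 0 ≤ z * (b + d) := by linarith [h6e, f3, f4, g3, g4]
  have hdiff1 : (2 - z) * (b - d) ≤ 0 := by linarith [h6e, f1, f2, g3, g4]
  have hdiff2 : 0 ≤ (2 - z) * (b - d) := by linarith [h6e, f3, f4, g1, g2]
  have hbd : b + d = 0 := by
    rcases mul_eq_zero.mp (le_antisymm hsum1 hsum2) with h | h
    · exact absurd h hz0.ne'
    · exact h
  have hbd2 : b - d = 0 := by
    rcases mul_eq_zero.mp (le_antisymm hdiff1 hdiff2) with h | h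
    · exfalso; linarith
    · exact h
  exact ⟨rfl, by linarith, rfl, by linarith⟩

lemma mem_S {x y : ℝ} (hx : |x| ≤ 1/2) (hy : |y| ≤ 1/2) :
    (x, y) ∈ convexHull ℝ {((0:ℝ), (-1:ℝ)), (1, 0), (0, 1), (-1, 0)} := by
  set S := convexHull ℝ {((0:ℝ), (-1:ℝ)), (1, 0), (0, 1), (-1, 0)} with hSdef
  have hS : Convex ℝ S := convex_convexHull ℝ _
  have v1 : ((0:ℝ), (-1:ℝ)) ∈ S := subset_convexHull ℝ _ (by simp)
  have v2 : ((1:ℝ), (0:ℝ)) ∈ S := subset_convexHull ℝ _ (by simp)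
  have v3 : ((0:ℝ), (1:ℝ)) ∈ S := subset_convexHull ℝ _ (by simp)
  have v4 : ((-1:ℝ), (0:ℝ)) ∈ S := subset_convexHull ℝ _ (by simp)
  have hx1 : -1/2 ≤ x := by rw [abs_le] at hx; linarith [hx.1]
  have hx2 : x ≤ 1/2 := (abs_le.mp hx).2
  have htop : ((x:ℝ), 1 - |x|) ∈ S := by
    rcases le_or_gt 0 x with h | h
    · exact chordK hS v3 v2 h (by linarith) (by ring) (by rw [abs_of_nonneg h]; ring)
    · exact chordK hS v3 v4 (by linarith : (0:ℝ) ≤ -x) (by linarith) (by ring)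
        (by rw [abs_of_neg h]; ring)
  have hbot : ((x:ℝ), -(1 - |x|)) ∈ S := by
    rcases le_or_gt 0 x with h | h
    · exact chordK hS v1 v2 h (by linarith) (by ring) (by rw [abs_of_nonneg h]; ring)
    · exact chordK hS v1 v4 (by linarith : (0:ℝ) ≤ -x) (by linarith) (by ring)
        (by rw [abs_of_neg h]; ring)
  have habs : (0:ℝ) < 1 - |x| := by
    rcases abs_cases x with ⟨h, -⟩ | ⟨h, -⟩ <;> rw [h] <;> linarith
  have hyb : -(1 - |x|) ≤ y ∧ y ≤ 1 - |x| := by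
    rw [abs_le] at hy
    constructor <;> [linarith [hy.1, habs]; linarith [hy.2, habs]]
  exact chordK (τ := (y + (1 - |x|)) / (2 * (1 - |x|))) hS hbot htop
    (div_nonneg (by linarith [hyb.1]) (by linarith))
    (by rw [div_le_one (by linarith)]; linarith [hyb.2])
    (by ring) (by field_simp [habs.ne']; ring)

lemma hull_eq_square {K : Set (ℝ × ℝ)} (hK : Convex ℝ K) (hKc : IsClosed K)
    (hvol : volume K = 2)
    (hsub : convexHull ℝ {((0:ℝ), (-1:ℝ)), (1, 0), (0, 1), (-1, 0)} ⊆ K) :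
    K = convexHull ℝ {((0:ℝ), (-1:ℝ)), (1, 0), (0, 1), (-1, 0)} := by
  set S := convexHull ℝ {((0:ℝ), (-1:ℝ)), (1, 0), (0, 1), (-1, 0)} with hSdef
  have hS : Convex ℝ S := convex_convexHull ℝ _
  have hSfin : ({((0:ℝ), (-1:ℝ)), (1, 0), (0, 1), (-1, 0)} : Set (ℝ × ℝ)).Finite :=
    Set.toFinite _
  have hScl : IsClosed S := (hSfin.isCompact_convexHull (𝕜 := ℝ)).isClosed
  have v1 : ((0:ℝ), (-1:ℝ)) ∈ S := subset_convexHull ℝ _ (by simp)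
  have v2 : ((1:ℝ), (0:ℝ)) ∈ S := subset_convexHull ℝ _ (by simp)
  have v3 : ((0:ℝ), (1:ℝ)) ∈ S := subset_convexHull ℝ _ (by simp)
  have v4 : ((-1:ℝ), (0:ℝ)) ∈ S := subset_convexHull ℝ _ (by simp)
  have hSvol : ENNReal.ofReal 2 ≤ volume S := by
    have h := four_strips S hS hScl.measurableSet
      (by norm_num : (-1:ℝ) ≤ 0) le_rfl le_rfl (by norm_num : (0:ℝ) ≤ 1)
      v4 v4 v1 v3 v1 v3 v1 v3 v2 v2
      le_rfl (by norm_num) (by norm_num) (by norm_num) le_rfl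
    convert h using 2
    norm_num
  refine Subset.antisymm ?_ hsub
  by_contra hns
  obtain ⟨x, hxK, hxS⟩ := Set.not_subset.mp hns
  obtain ⟨f, cc, hfS, hfx⟩ := geometric_hahn_banach_closed_point hS hScl hxS
  set M : ℝ := |f x| + ‖f‖ / 2 + 1 with hMdef
  have hM : (0:ℝ) < M := by positivity
  set t : ℝ := min (1/2) ((f x - cc) / (2 * M)) with htdef
  have ht0 : (0:ℝ) < t := lt_min (by norm_num) (div_pos (by linarith) (by positivity))
  have ht1 : t ≤ 1/2 := min_le_left _ _
  have htM : t * (2 * M) ≤ f x - cc := by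
    have := min_le_right (1/2 : ℝ) ((f x - cc) / (2 * M))
    calc t * (2 * M) ≤ (f x - cc) / (2 * M) * (2 * M) :=
          mul_le_mul_of_nonneg_right this (by positivity)
      _ = f x - cc := by field_simp
  have hball : Metric.ball ((1 - t) • x) (t / 2) ⊆ K := by
    intro q hq
    have hdist : ‖q - (1 - t) • x‖ < t / 2 := by
      rw [← dist_eq_norm]; exact Metric.mem_ball.mp hq
    set w : ℝ × ℝ := t⁻¹ • (q - (1 - t) • x) with hw
    have hwn : ‖w‖ ≤ 1/2 := by
      rw [hw, norm_smul, norm_inv, Real.norm_eq_abs, abs_of_pos ht0]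
      rw [inv_mul_le_iff₀ ht0]
      calc ‖q - (1 - t) • x‖ ≤ t / 2 := hdist.le
        _ ≤ t * (1/2) := by ring_nf; exact le_rfl
    have hwS : w ∈ S := by
      have h1 : |w.1| ≤ 1/2 := le_trans (by rw [Prod.norm_def]; exact le_max_left _ _ |>.trans_eq' (Real.norm_eq_abs _).symm) hwn
      have h2 : |w.2| ≤ 1/2 := le_trans (by rw [Prod.norm_def]; exact le_max_right _ _ |>.trans_eq' (Real.norm_eq_abs _).symm) hwn
      have := mem_S h1 h2
      simpa using this
    have hq' : q = (1 - t) • x + t • w := by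
      rw [hw, smul_smul, mul_inv_cancel₀ ht0.ne', one_smul]
      abel
    rw [hq']
    exact hK hxK (hsub hwS) (by linarith) ht0.le (by ring)
  have hdisj : Disjoint S (Metric.ball ((1 - t) • x) (t / 2)) := by
    rw [Set.disjoint_left]
    intro p hpS hpB
    have h1 : f p < cc := hfS p hpS
    have hdist : ‖p - (1 - t) • x‖ ≤ t / 2 := by
      rw [← dist_eq_norm]; exact (Metric.mem_ball.mp hpB).le
    have h2 : |f (p - (1 - t) • x)| ≤ ‖f‖ * (t / 2) := by
      calc |f (p - (1 - t) • x)| ≤ ‖f‖ * ‖p - (1 - t) • x‖ := f.le_opNorm _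
        _ ≤ ‖f‖ * (t / 2) := by
            exact mul_le_mul_of_nonneg_left hdist (norm_nonneg f)
    have h3 : f (p - (1 - t) • x) = f p - (1 - t) * f x := by
      rw [map_sub, ContinuousLinearMap.map_smul, smul_eq_mul]
    have h4 : t * f x ≤ t * |f x| := mul_le_mul_of_nonneg_left (le_abs_self _) ht0.le
    rw [hMdef] at htM
    have h5 : cc < f p := by
      have hlow : f (p - (1 - t) • x) ≥ -(‖f‖ * (t / 2)) := by
        rcases abs_le.mp h2 with ⟨hh, -⟩; linarith
      linarith [h3, hlow, h4, htM, ht0, hfx]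
    linarith
  have hbpos : 0 < volume (Metric.ball ((1 - t) • x) (t / 2)) :=
    Metric.measure_ball_pos _ _ (by positivity)
  have hge : volume S + volume (Metric.ball ((1 - t) • x) (t / 2)) ≤ volume K := by
    rw [← measure_union hdisj Metric.isOpen_ball.measurableSet]
    exact measure_mono (union_subset hsub hball)
  have : (2:ENNReal) < 2 := by
    calc (2:ENNReal) < 2 + volume (Metric.ball ((1 - t) • x) (t / 2)) :=
          ENNReal.lt_add_right (by norm_num) hbpos.ne'
      _ ≤ volume S + volume (Metric.ball ((1 - t) • x) (t / 2)) := by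
          gcongr
          calc (2:ENNReal) = ENNReal.ofReal 2 := by norm_num
            _ ≤ volume S := hSvol
      _ ≤ volume K := hge
      _ = 2 := hvol
  exact absurd this (lt_irrefl _)

lemma translate_hull (s : ℝ × ℝ) (A : Set (ℝ × ℝ)) :
    convexHull ℝ ((fun p => p + s) '' A) = (fun p => p + s) '' convexHull ℝ A := by
  have h : (fun p : ℝ × ℝ => p + s) = (s +ᵥ ·) := funext fun p => add_comm p s
  rw [h, Set.image_vadd, Set.image_vadd, convexHull_vadd]

lemma translate_vol (s : ℝ × ℝ) (A : Set (ℝ × ℝ)) :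
    volume ((fun p => p + s) '' A) = volume A := by
  have h : (fun p : ℝ × ℝ => p + s) = (s +ᵥ ·) := funext fun p => add_comm p s
  rw [h, Set.image_vadd]
  exact measure_vadd _ _ _

/-- For `z ∈ (0,1)`: if translates of the triangles `T₁`, `T₂` and the segment
`D` have convex hull of area exactly `2`, then this convex hull is a translate
of the square `conv{(0,-1),(1,0),(0,1),(-1,0)}`. -/
theorem cover_area_eq_two_implies_translate_of_square (z : ℝ) (hz : z ∈ Ioo (0:ℝ) 1)
    (s₁ s₂ s₃ : ℝ × ℝ)
    (hvol : volume (convexHull ℝ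
      (((fun p => p + s₁) '' (convexHull ℝ {((-1 + z : ℝ), z), (-1 + z, -z), (1, 0)})) ∪
       ((fun p => p + s₂) '' (convexHull ℝ {((1 - z : ℝ), z), (1 - z, -z), (-1, 0)})) ∪
       ((fun p => p + s₃) '' segment ℝ ((0:ℝ), -1) ((0:ℝ), 1)))) = 2) :
    ∃ t : ℝ × ℝ,
      convexHull ℝ
        (((fun p => p + s₁) '' (convexHull ℝ {((-1 + z : ℝ), z), (-1 + z, -z), (1, 0)})) ∪
         ((fun p => p + s₂) '' (convexHull ℝ {((1 - z : ℝ), z), (1 - z, -z), (-1, 0)})) ∪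
         ((fun p => p + s₃) '' segment ℝ ((0:ℝ), -1) ((0:ℝ), 1))) =
      (fun p => p + t) '' (convexHull ℝ {((0:ℝ), (-1:ℝ)), (1, 0), (0, 1), (-1, 0)}) := by
  obtain ⟨hz0, hz1⟩ := hz
  set T1 : Set (ℝ × ℝ) := convexHull ℝ {((-1 + z : ℝ), z), (-1 + z, -z), (1, 0)} with hT1def
  set T2 : Set (ℝ × ℝ) := convexHull ℝ {((1 - z : ℝ), z), (1 - z, -z), (-1, 0)} with hT2def
  set D : Set (ℝ × ℝ) := segment ℝ ((0:ℝ), -1) ((0:ℝ), 1) with hDdef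
  set u : ℝ × ℝ := s₁ - s₃ with hudef
  set v : ℝ × ℝ := s₂ - s₃ with hvdef
  set E : Set (ℝ × ℝ) := ((fun p => p + u) '' T1) ∪ ((fun p => p + v) '' T2) ∪ D with hEdef
  have hfun1 : (fun x : ℝ × ℝ => x + u + s₃) = (fun p : ℝ × ℝ => p + s₁) := by
    funext p
    rw [hudef]
    abel
  have hfun2 : (fun x : ℝ × ℝ => x + v + s₃) = (fun p : ℝ × ℝ => p + s₂) := by
    funext p
    rw [hvdef]
    abel
  have himg1 : (fun p => p + s₁) '' T1 = (fun p => p + s₃) '' ((fun p => p + u) '' T1) := by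
    rw [Set.image_image, hfun1]
  have himg2 : (fun p => p + s₂) '' T2 = (fun p => p + s₃) '' ((fun p => p + v) '' T2) := by
    rw [Set.image_image, hfun2]
  have hset : ((fun p => p + s₁) '' T1) ∪ ((fun p => p + s₂) '' T2) ∪ ((fun p => p + s₃) '' D)
      = (fun p => p + s₃) '' E := by
    rw [himg1, himg2, hEdef, Set.image_union, Set.image_union]
  set K₀ : Set (ℝ × ℝ) := convexHull ℝ E with hK₀def
  have hKeq : convexHull ℝ (((fun p => p + s₁) '' T1) ∪ ((fun p => p + s₂) '' T2)
      ∪ ((fun p => p + s₃) '' D)) = (fun p => p + s₃) '' K₀ := by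
    rw [hset, translate_hull]
  have hvol₀ : volume K₀ = 2 := by
    rw [hKeq] at hvol
    rwa [translate_vol] at hvol
  have hK₀conv : Convex ℝ K₀ := convex_convexHull ℝ E
  have hcont : ∀ w : ℝ × ℝ, Continuous (fun p : ℝ × ℝ => p + w) :=
    fun w => continuous_id.add continuous_const
  have hEc : IsCompact E := by
    refine IsCompact.union (IsCompact.union ?_ ?_) ?_
    · exact ((Set.toFinite _).isCompact_convexHull (𝕜 := ℝ)).image (hcont u)
    · exact ((Set.toFinite _).isCompact_convexHull (𝕜 := ℝ)).image (hcont v)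
    · rw [hDdef, ← convexHull_pair]
      exact (Set.toFinite _).isCompact_convexHull (𝕜 := ℝ)
  have hEhull : K₀ = convexHull ℝ
      (({((0:ℝ), (-1:ℝ)), ((0:ℝ), (1:ℝ))} : Set (ℝ × ℝ)) ∪
        (((fun p => p + u) '' {((-1 + z : ℝ), z), (-1 + z, -z), (1, 0)}) ∪
         ((fun p => p + v) '' {((1 - z : ℝ), z), (1 - z, -z), (-1, 0)}))) := by
    rw [hK₀def, hEdef, hT1def, hT2def, hDdef]
    rw [show segment ℝ ((0:ℝ), (-1:ℝ)) ((0:ℝ), (1:ℝ))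
      = convexHull ℝ {((0:ℝ), (-1:ℝ)), ((0:ℝ), (1:ℝ))} from (convexHull_pair _ _).symm]
    rw [← translate_hull, ← translate_hull, union_assoc]
    rw [convexHull_convexHull_union_left, union_comm, union_assoc,
      convexHull_convexHull_union_left, union_comm, union_assoc,
      convexHull_convexHull_union_left]
  have hK₀c : IsCompact K₀ := by
    rw [hEhull]
    apply Set.Finite.isCompact_convexHull
    exact (Set.toFinite _).union (((Set.toFinite _).image _).union ((Set.toFinite _).image _))
  have hK₀m : MeasurableSet K₀ := hK₀c.isClosed.measurableSet
  -- memberships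
  have memT1 : ∀ q ∈ ({((-1 + z : ℝ), z), (-1 + z, -z), (1, 0)} : Set (ℝ × ℝ)),
      q + u ∈ K₀ := fun q hq =>
    subset_convexHull ℝ E (Or.inl (Or.inl ⟨q, subset_convexHull ℝ _ hq, rfl⟩))
  have memT2 : ∀ q ∈ ({((1 - z : ℝ), z), (1 - z, -z), (-1, 0)} : Set (ℝ × ℝ)),
      q + v ∈ K₀ := fun q hq =>
    subset_convexHull ℝ E (Or.inl (Or.inr ⟨q, subset_convexHull ℝ _ hq, rfl⟩))
  have mA : ((1 + u.1 : ℝ), u.2) ∈ K₀ := by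
    have h := memT1 (1, 0) (by simp)
    convert h using 1
    simp [Prod.ext_iff]
  have mE1p : ((-1 + z + u.1 : ℝ), u.2 + z) ∈ K₀ := by
    have h := memT1 ((-1 + z : ℝ), z) (by simp)
    convert h using 1
    simp [Prod.ext_iff, add_comm]
  have mE1m : ((-1 + z + u.1 : ℝ), u.2 - z) ∈ K₀ := by
    have h := memT1 ((-1 + z : ℝ), -z) (by simp)
    convert h using 1
    simp [Prod.ext_iff]
    ring
  have mB : ((-1 + v.1 : ℝ), v.2) ∈ K₀ := by
    have h := memT2 ((-1 : ℝ), 0) (by simp)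
    convert h using 1
    simp [Prod.ext_iff]
  have mE2p : ((1 - z + v.1 : ℝ), v.2 + z) ∈ K₀ := by
    have h := memT2 ((1 - z : ℝ), z) (by simp)
    convert h using 1
    simp [Prod.ext_iff, add_comm]
  have mE2m : ((1 - z + v.1 : ℝ), v.2 - z) ∈ K₀ := by
    have h := memT2 ((1 - z : ℝ), -z) (by simp)
    convert h using 1
    simp [Prod.ext_iff]
    ring
  have mS : ((0 : ℝ), (-1 : ℝ)) ∈ K₀ :=
    subset_convexHull ℝ E (Or.inr (left_mem_segment ℝ _ _))
  have mN : ((0 : ℝ), (1 : ℝ)) ∈ K₀ :=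
    subset_convexHull ℝ E (Or.inr (right_mem_segment ℝ _ _))
  obtain ⟨ha, hb, hc, hd⟩ := key z u.1 u.2 v.1 v.2 hz0 hz1 K₀ hK₀conv hK₀m
    mA mE1p mE1m mB mE2p mE2m mN mS hvol₀
  -- the hull equals the square
  have hSsub : convexHull ℝ {((0:ℝ), (-1:ℝ)), (1, 0), (0, 1), (-1, 0)} ⊆ K₀ := by
    apply convexHull_min _ hK₀conv
    intro p hp
    rcases hp with rfl | rfl | rfl | rfl
    · exact mS
    · have := mA; rwa [ha, hb, add_zero] at this
    · exact mN
    · have := mB; rwa [hc, hd, add_zero] at this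
  have hfinal : K₀ = convexHull ℝ {((0:ℝ), (-1:ℝ)), (1, 0), (0, 1), (-1, 0)} :=
    hull_eq_square hK₀conv hK₀c.isClosed hvol₀ hSsub
  exact ⟨s₃, by rw [hKeq, hfinal]⟩
end

section
/- Let Δ be the triangle in ℝ² with vertices (-1/2, -1/(2√3)), (1/2, -1/(2√3)), (0, 1/√3), and let t = (t₁, t₂) with t₁ = 1/(2√3) and t₂ ∈ [-1/2, 1/2]. Let T*(t) = conv{JΔ, -JΔ + t}, where J is rotation by -π/2. Define A_t = [[√3/2, t₂],[0,1]] and the translations s₁(x) = x + (1/2, 1/(2√3)), s₂(y) = y + (1/(2√3), 1/2). Then A_t(s₁(Δ)) = conv{(0,0), (√3/2, 0), (√3/4 + (√3/2)t₂, √3/2)} and (A_tᵀ)⁻¹(s₂(T*(t))) = [0,1]² (the unit square). -/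
open Set

noncomputable def affMap (a b c d e f : ℝ) : (ℝ × ℝ) →ᵃ[ℝ] (ℝ × ℝ) where
  toFun := fun p => (a * p.1 + b * p.2 + e, c * p.1 + d * p.2 + f)
  linear := {
    toFun := fun p => (a * p.1 + b * p.2, c * p.1 + d * p.2)
    map_add' := by intro p q; simp [Prod.ext_iff]; constructor <;> ring
    map_smul' := by intro r p; simp [Prod.ext_iff, smul_eq_mul]; constructor <;> ring }
  map_vadd' := by intro p v; simp [Prod.ext_iff]; constructor <;> ring

lemma affMap_hull (a b c d e f : ℝ) (S : Set (ℝ × ℝ)) :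
    (fun p : ℝ × ℝ => (a * p.1 + b * p.2 + e, c * p.1 + d * p.2 + f)) '' convexHull ℝ S =
      convexHull ℝ ((fun p : ℝ × ℝ => (a * p.1 + b * p.2 + e, c * p.1 + d * p.2 + f)) '' S) :=
  (affMap a b c d e f).image_convexHull S

lemma square_hull : convexHull ℝ {((0:ℝ),(0:ℝ)), (0,1), (1,0), (1,1)} =
    Icc ((0:ℝ), (0:ℝ)) ((1:ℝ), (1:ℝ)) := by
  have h : ({((0:ℝ),(0:ℝ)), (0,1), (1,0), (1,1)} : Set (ℝ×ℝ)) =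
      ({0,1} : Set ℝ) ×ˢ ({0,1} : Set ℝ) := by
    ext ⟨x, y⟩; simp [Prod.ext_iff]; tauto
  rw [h, convexHull_prod, Icc_prod_eq, convexHull_pair, segment_eq_Icc zero_le_one]

set_option maxHeartbeats 2000000 in
/-- For the equilateral-type triangle `Δ` with vertices
`(-1/2, -1/(2√3)), (1/2, -1/(2√3)), (0, 1/√3)` and `t = (1/(2√3), t₂)` with
`t₂ ∈ [-1/2, 1/2]`, setting `T*(t) = conv{JΔ, -JΔ + t}`, the affine maps built
from `A_t = [[√3/2, t₂],[0,1]]` and the indicated translations map `Δ` onto the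
triangle `conv{(0,0), (√3/2,0), (√3/4 + (√3/2)t₂, √3/2)}` and `T*(t)` onto the
unit square `[0,1]²`. -/
theorem triangle_times_parallelogram_normal_form (t₂ : ℝ)
    (ht : t₂ ∈ Icc (-(1/2) : ℝ) (1/2)) :
    let r3 : ℝ := Real.sqrt 3
    let Δ : Set (ℝ × ℝ) :=
      convexHull ℝ {(-(1/2 : ℝ), -(1/(2 * r3))), ((1/2 : ℝ), -(1/(2 * r3))), ((0:ℝ), 1/r3)}
    let t : ℝ × ℝ := (1/(2 * r3), t₂)
    let Tstar : Set (ℝ × ℝ) :=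
      convexHull ℝ (((fun p : ℝ × ℝ => (p.2, -p.1)) '' Δ) ∪
        ((fun p : ℝ × ℝ => (-p.2, p.1) + t) '' Δ))
    let A : ℝ × ℝ → ℝ × ℝ := fun p => (r3/2 * p.1 + t₂ * p.2, p.2)
    let B : ℝ × ℝ → ℝ × ℝ := fun p => (2/r3 * p.1, -(2 * t₂/r3) * p.1 + p.2)
    (A '' ((fun p => p + ((1/2 : ℝ), 1/(2 * r3))) '' Δ) =
      convexHull ℝ {((0:ℝ), (0:ℝ)), (r3/2, 0), (r3/4 + (r3/2) * t₂, r3/2)}) ∧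
    (B '' ((fun p => p + (1/(2 * r3), (1/2 : ℝ))) '' Tstar) =
      Icc ((0:ℝ), (0:ℝ)) ((1:ℝ), (1:ℝ))) := by
  intro r3 Δ t Tstar A B
  obtain ⟨ht1, ht2⟩ := ht
  have hr : (0:ℝ) < r3 := Real.sqrt_pos.2 (by norm_num)
  have hrne : r3 ≠ 0 := ne_of_gt hr
  have hr3 : r3 * r3 = 3 := Real.mul_self_sqrt (by norm_num)
  constructor
  · -- first conjunct
    rw [image_image]
    have h1 : (fun x : ℝ × ℝ => A (x + ((1/2 : ℝ), 1/(2 * r3)))) =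
        fun p : ℝ × ℝ => (r3/2 * p.1 + t₂ * p.2 + (r3/4 + t₂/(2*r3)),
          0 * p.1 + 1 * p.2 + 1/(2*r3)) := by
      funext p
      show (r3/2 * (p.1 + 1/2) + t₂ * (p.2 + 1/(2*r3)), p.2 + 1/(2*r3)) = _
      simp only [Prod.mk.injEq]
      constructor <;> field_simp <;> ring
    rw [h1, affMap_hull, image_insert_eq, image_insert_eq, image_singleton]
    have e1 : (r3/2 * (-(1/2:ℝ)) + t₂ * (-(1/(2*r3))) + (r3/4 + t₂/(2*r3)),
        0 * (-(1/2:ℝ)) + 1 * (-(1/(2*r3))) + 1/(2*r3)) = ((0:ℝ), (0:ℝ)) := by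
      simp only [Prod.mk.injEq]
      constructor
      · field_simp; ring
      · ring
    have e2 : (r3/2 * ((1/2:ℝ)) + t₂ * (-(1/(2*r3))) + (r3/4 + t₂/(2*r3)),
        0 * ((1/2:ℝ)) + 1 * (-(1/(2*r3))) + 1/(2*r3)) = ((r3/2 : ℝ), (0:ℝ)) := by
      simp only [Prod.mk.injEq]
      constructor
      · field_simp; ring
      · ring
    have e3 : (r3/2 * (0:ℝ) + t₂ * (1/r3) + (r3/4 + t₂/(2*r3)),
        0 * (0:ℝ) + 1 * (1/r3) + 1/(2*r3)) = ((r3/4 + (r3/2) * t₂ : ℝ), (r3/2 : ℝ)) := by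
      simp only [Prod.mk.injEq]
      constructor
      · field_simp; linear_combination (-4 * t₂) * hr3
      · field_simp; linear_combination (-1) * hr3
    rw [e1, e2, e3]
  · -- second conjunct
    -- rewrite J and K into affine normal form
    have hJfun : (fun p : ℝ × ℝ => (p.2, -p.1)) =
        fun p : ℝ × ℝ => (0 * p.1 + 1 * p.2 + 0, -1 * p.1 + 0 * p.2 + 0) := by
      funext p; simp only [Prod.mk.injEq]; constructor <;> ring
    have hKfun : (fun p : ℝ × ℝ => (-p.2, p.1) + t) =
        fun p : ℝ × ℝ => (0 * p.1 + -1 * p.2 + 1/(2*r3), 1 * p.1 + 0 * p.2 + t₂) := by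
      funext p
      show (-p.2, p.1) + ((1/(2*r3) : ℝ), t₂) = _
      simp only [Prod.mk_add_mk, Prod.mk.injEq]
      constructor <;> ring
    -- the six generating points of Tstar
    have j1 : (0 * (-(1/2:ℝ)) + 1 * (-(1/(2*r3))) + 0, -1 * (-(1/2:ℝ)) + 0 * (-(1/(2*r3))) + 0) = ((-(1/(2*r3)) : ℝ), (1/2 : ℝ)) := by
      simp only [Prod.mk.injEq]; constructor <;> ring
    have j2 : (0 * ((1/2:ℝ)) + 1 * (-(1/(2*r3))) + 0, -1 * ((1/2:ℝ)) + 0 * (-(1/(2*r3))) + 0) = ((-(1/(2*r3)) : ℝ), (-(1/2) : ℝ)) := by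
      simp only [Prod.mk.injEq]; constructor <;> ring
    have j3 : (0 * ((0:ℝ)) + 1 * (1/r3) + 0, -1 * ((0:ℝ)) + 0 * (1/r3) + 0) = ((1/r3 : ℝ), (0 : ℝ)) := by
      simp only [Prod.mk.injEq]; constructor <;> ring
    have k1 : (0 * (-(1/2:ℝ)) + -1 * (-(1/(2*r3))) + 1/(2*r3), 1 * (-(1/2:ℝ)) + 0 * (-(1/(2*r3))) + t₂) = ((1/r3 : ℝ), t₂ - 1/2) := by
      simp only [Prod.mk.injEq]; constructor
      · field_simp
        try norm_num
        try ring
      · ring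
    have k2 : (0 * ((1/2:ℝ)) + -1 * (-(1/(2*r3))) + 1/(2*r3), 1 * ((1/2:ℝ)) + 0 * (-(1/(2*r3))) + t₂) = ((1/r3 : ℝ), t₂ + 1/2) := by
      simp only [Prod.mk.injEq]; constructor
      · field_simp
        try norm_num
        try ring
      · ring
    have k3 : (0 * ((0:ℝ)) + -1 * (1/r3) + 1/(2*r3), 1 * ((0:ℝ)) + 0 * (1/r3) + t₂) = ((-(1/(2*r3)) : ℝ), t₂) := by
      simp only [Prod.mk.injEq]; constructor
      · field_simp
        try norm_num
        try ring
      · ring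
    have hT : Tstar = convexHull ℝ
        (({((-(1/(2*r3)) : ℝ), (1/2 : ℝ)), ((-(1/(2*r3)) : ℝ), (-(1/2) : ℝ)),
            ((1/r3 : ℝ), (0:ℝ))} : Set (ℝ × ℝ)) ∪
         ({((1/r3 : ℝ), t₂ - 1/2), ((1/r3 : ℝ), t₂ + 1/2),
            ((-(1/(2*r3)) : ℝ), t₂)} : Set (ℝ × ℝ))) := by
      show convexHull ℝ (((fun p : ℝ × ℝ => (p.2, -p.1)) ''
          convexHull ℝ {(-(1/2 : ℝ), -(1/(2 * r3))), ((1/2 : ℝ), -(1/(2 * r3))), ((0:ℝ), 1/r3)}) ∪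
        ((fun p : ℝ × ℝ => (-p.2, p.1) + t) ''
          convexHull ℝ {(-(1/2 : ℝ), -(1/(2 * r3))), ((1/2 : ℝ), -(1/(2 * r3))), ((0:ℝ), 1/r3)})) = _
      rw [hJfun, hKfun, affMap_hull, affMap_hull, convexHull_convexHull_union_left,
        convexHull_convexHull_union_right, image_insert_eq, image_insert_eq, image_singleton,
        image_insert_eq, image_insert_eq, image_singleton]
      simp only []
      rw [j1, j2, j3, k1, k2, k3]
    rw [image_image]
    have h2 : (fun x : ℝ × ℝ => B (x + (1/(2 * r3), (1/2 : ℝ)))) =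
        fun p : ℝ × ℝ => (2/r3 * p.1 + 0 * p.2 + 1/(r3*r3),
          -(2*t₂/r3) * p.1 + 1 * p.2 + (1/2 - t₂/(r3*r3))) := by
      funext p
      show (2/r3 * (p.1 + 1/(2*r3)), -(2*t₂/r3) * (p.1 + 1/(2*r3)) + (p.2 + 1/2)) = _
      simp only [Prod.mk.injEq]
      constructor <;> field_simp <;> ring
    rw [h2, hT, affMap_hull, image_union, image_insert_eq, image_insert_eq, image_singleton,
      image_insert_eq, image_insert_eq, image_singleton]
    simp only []
    -- compute the six image points
    have q1 : (2/r3 * (-(1/(2*r3)) : ℝ) + 0 * ((1/2 : ℝ)) + 1/(r3*r3), -(2*t₂/r3) * (-(1/(2*r3)) : ℝ) + 1 * ((1/2 : ℝ)) + (1/2 - t₂/(r3*r3))) = (((0:ℝ), (1:ℝ))) := by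
      simp only [Prod.mk.injEq]; constructor <;> field_simp <;> ring
    have q2 : (2/r3 * (-(1/(2*r3)) : ℝ) + 0 * ((-(1/2) : ℝ)) + 1/(r3*r3), -(2*t₂/r3) * (-(1/(2*r3)) : ℝ) + 1 * ((-(1/2) : ℝ)) + (1/2 - t₂/(r3*r3))) = (((0:ℝ), (0:ℝ))) := by
      simp only [Prod.mk.injEq]; constructor <;> field_simp <;> ring
    have q3 : (2/r3 * ((1/r3 : ℝ)) + 0 * ((0:ℝ)) + 1/(r3*r3), -(2*t₂/r3) * ((1/r3 : ℝ)) + 1 * ((0:ℝ)) + (1/2 - t₂/(r3*r3))) = (((1:ℝ), 1/2 - t₂)) := by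
      simp only [Prod.mk.injEq]; constructor
      · field_simp; linear_combination -hr3
      · field_simp; linear_combination (2*t₂) * hr3
    have q4 : (2/r3 * ((1/r3 : ℝ)) + 0 * (t₂ - 1/2) + 1/(r3*r3), -(2*t₂/r3) * ((1/r3 : ℝ)) + 1 * (t₂ - 1/2) + (1/2 - t₂/(r3*r3))) = (((1:ℝ), (0:ℝ))) := by
      simp only [Prod.mk.injEq]; constructor
      · field_simp; linear_combination (-2) * hr3
      · field_simp; linear_combination (2*t₂) * hr3
    have q5 : (2/r3 * ((1/r3 : ℝ)) + 0 * (t₂ + 1/2) + 1/(r3*r3), -(2*t₂/r3) * ((1/r3 : ℝ)) + 1 * (t₂ + 1/2) + (1/2 - t₂/(r3*r3))) = (((1:ℝ), (1:ℝ))) := by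
      simp only [Prod.mk.injEq]; constructor
      · field_simp; linear_combination (-2) * hr3
      · field_simp; linear_combination (2*t₂) * hr3
    have q6 : (2/r3 * (-(1/(2*r3)) : ℝ) + 0 * (t₂) + 1/(r3*r3), -(2*t₂/r3) * (-(1/(2*r3)) : ℝ) + 1 * (t₂) + (1/2 - t₂/(r3*r3))) = (((0:ℝ), t₂ + 1/2)) := by
      simp only [Prod.mk.injEq]; constructor <;> field_simp <;> ring
    rw [q1, q2, q3, q4, q5, q6]
    -- final convex hull computation
    rw [← square_hull]
    apply Subset.antisymm
    · apply convexHull_min _ (convex_convexHull ℝ _)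
      rintro p hp
      simp only [mem_union, mem_insert_iff, mem_singleton_iff] at hp
      have hseg1 : ((1:ℝ), 1/2 - t₂) ∈ convexHull ℝ
          {((0:ℝ),(0:ℝ)), (0,1), (1,0), (1,1)} := by
        have hs : ((1:ℝ), 1/2 - t₂) ∈ segment ℝ ((1:ℝ),(0:ℝ)) ((1:ℝ),(1:ℝ)) :=
          ⟨1/2 + t₂, 1/2 - t₂, by linarith, by linarith, by ring, by
            simp only [Prod.smul_mk, smul_eq_mul, Prod.mk_add_mk, Prod.mk.injEq]
            constructor <;> ring⟩
        have m1 : ((1:ℝ),(0:ℝ)) ∈ convexHull ℝ ({((0:ℝ),(0:ℝ)), (0,1), (1,0), (1,1)} : Set (ℝ×ℝ)) :=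
          subset_convexHull ℝ _ (by norm_num)
        have m2 : ((1:ℝ),(1:ℝ)) ∈ convexHull ℝ ({((0:ℝ),(0:ℝ)), (0,1), (1,0), (1,1)} : Set (ℝ×ℝ)) :=
          subset_convexHull ℝ _ (by norm_num)
        exact (convex_convexHull ℝ _).segment_subset m1 m2 hs
      have hseg2 : ((0:ℝ), t₂ + 1/2) ∈ convexHull ℝ
          {((0:ℝ),(0:ℝ)), (0,1), (1,0), (1,1)} := by
        have hs : ((0:ℝ), t₂ + 1/2) ∈ segment ℝ ((0:ℝ),(0:ℝ)) ((0:ℝ),(1:ℝ)) :=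
          ⟨1/2 - t₂, 1/2 + t₂, by linarith, by linarith, by ring, by
            simp only [Prod.smul_mk, smul_eq_mul, Prod.mk_add_mk, Prod.mk.injEq]
            constructor <;> ring⟩
        have m1 : ((0:ℝ),(0:ℝ)) ∈ convexHull ℝ ({((0:ℝ),(0:ℝ)), (0,1), (1,0), (1,1)} : Set (ℝ×ℝ)) :=
          subset_convexHull ℝ _ (by norm_num)
        have m2 : ((0:ℝ),(1:ℝ)) ∈ convexHull ℝ ({((0:ℝ),(0:ℝ)), (0,1), (1,0), (1,1)} : Set (ℝ×ℝ)) :=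
          subset_convexHull ℝ _ (by norm_num)
        exact (convex_convexHull ℝ _).segment_subset m1 m2 hs
      rcases hp with ((h|h|h)|(h|h|h)) <;> subst h
      · exact subset_convexHull ℝ _ (by norm_num)
      · exact subset_convexHull ℝ _ (by norm_num)
      · exact hseg1
      · exact subset_convexHull ℝ _ (by norm_num)
      · exact subset_convexHull ℝ _ (by norm_num)
      · exact hseg2
    · apply convexHull_mono
      intro p hp
      simp only [mem_insert_iff, mem_singleton_iff] at hp
      simp only [mem_union, mem_insert_iff, mem_singleton_iff]
      tauto
end

section
/- Let z ∈ (0,1), and consider the 'rdl' arrangement obstruction: any convex set in ℝ² containing a translate of the triangle T₂ with vertices (1-z, z), (1-z, -z), (-1, 0), a translate of the segment D from (0,-1) to (0,1), and a translate of the triangle T₁ with vertices (-1+z, z), (-1+z, -z), (1, 0), arranged so that (reading left to right) the vertical line through the short side of T₂ lies weakly to the left of the line containing D, which lies weakly to the left of the vertical line through the short side of T₁, has area at least 4 - 2z > 2. -/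
open Set MeasureTheory intervalIntegral

/-- Auxiliary: membership in a convex set containing a vertical segment
`(m, d-1)–(m, d+1)` and an apex `(a, cL)`, for points in the resulting triangle,
parametrized by `t = (x-a)/(m-a) ∈ (0,1]`. -/
lemma rdl_tri_mem (C : Set (ℝ × ℝ)) (hC : Convex ℝ C) {a m cL d x y : ℝ}
    (hm : m - a ≠ 0)
    (hL : ((a : ℝ), cL) ∈ C) (hP : ((m : ℝ), d - 1) ∈ C) (hQ : ((m : ℝ), d + 1) ∈ C)
    (ht0 : 0 < (x - a) / (m - a)) (ht1 : (x - a) / (m - a) ≤ 1)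
    (hy1 : cL + (x - a) / (m - a) * (d - 1 - cL) ≤ y)
    (hy2 : y ≤ cL + (x - a) / (m - a) * (d + 1 - cL)) :
    ((x : ℝ), y) ∈ C := by
  set t := (x - a) / (m - a) with htdef
  have hx : x = a + t * (m - a) := by
    rw [htdef, div_mul_cancel₀ _ hm]; ring
  set y' := (y - (1 - t) * cL) / t with hy'def
  have ht0' : t ≠ 0 := ne_of_gt ht0
  have hy' : y = (1 - t) * cL + t * y' := by
    have := div_mul_cancel₀ (y - (1 - t) * cL) ht0'
    rw [hy'def]; linarith [this]
  have h1 : d - 1 ≤ y' := by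
    rw [hy'def, le_div_iff₀ ht0]
    nlinarith [hy1]
  have h2 : y' ≤ d + 1 := by
    rw [hy'def, div_le_iff₀ ht0]
    nlinarith [hy2]
  have hM : ((m : ℝ), y') ∈ C := by
    have := hC.segment_subset hP hQ
    apply this
    refine ⟨1 - (y' - (d - 1)) / 2, (y' - (d - 1)) / 2, by linarith, by linarith, by ring, ?_⟩
    have : ((1 : ℝ) - (y' - (d - 1)) / 2) • ((m : ℝ), d - 1) + ((y' - (d - 1)) / 2) • ((m : ℝ), d + 1)
        = ((1 - (y' - (d - 1)) / 2) * m + (y' - (d - 1)) / 2 * m,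
           (1 - (y' - (d - 1)) / 2) * (d - 1) + (y' - (d - 1)) / 2 * (d + 1)) := rfl
    rw [this]
    exact Prod.ext (by ring) (by ring)
  have := hC.segment_subset hL hM
  apply this
  refine ⟨1 - t, t, by linarith, le_of_lt ht0, by ring, ?_⟩
  have : ((1 : ℝ) - t) • ((a : ℝ), cL) + t • ((m : ℝ), y')
      = ((1 - t) * a + t * m, (1 - t) * cL + t * y') := rfl
  rw [this]
  exact Prod.ext (by rw [hx]; ring) (by rw [hy'])

/-- For `z ∈ (0,1)`, any convex set containing translates of `T₂`, `D`, `T₁`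
arranged left-to-right (the vertical line through the short side of `T₂` weakly
left of the line of `D`, weakly left of the vertical line through the short side
of `T₁`) has area at least `4 - 2z > 2`. -/
theorem rdl_arrangement_area_lower_bound (z : ℝ) (hz : z ∈ Ioo (0:ℝ) 1)
    (C : Set (ℝ × ℝ)) (hC : Convex ℝ C) (s₁ s₂ s₃ : ℝ × ℝ)
    (hT₂ : (fun p => p + s₂) '' (convexHull ℝ {((1 - z : ℝ), z), (1 - z, -z), (-1, 0)}) ⊆ C)
    (hD : (fun p => p + s₃) '' segment ℝ ((0:ℝ), -1) ((0:ℝ), 1) ⊆ C)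
    (hT₁ : (fun p => p + s₁) '' (convexHull ℝ {((-1 + z : ℝ), z), (-1 + z, -z), (1, 0)}) ⊆ C)
    (horder₁ : (1 - z) + s₂.1 ≤ s₃.1) (horder₂ : s₃.1 ≤ (-1 + z) + s₁.1) :
    ENNReal.ofReal (4 - 2 * z) ≤ volume C ∧ (2 : ℝ) < 4 - 2 * z := by
  obtain ⟨hz0, hz1⟩ := hz
  refine ⟨?_, by linarith⟩
  -- key points
  set a : ℝ := -1 + s₂.1 with ha
  set m : ℝ := s₃.1 with hmm
  set b : ℝ := 1 + s₁.1 with hb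
  set cL : ℝ := s₂.2 with hcL
  set cR : ℝ := s₁.2 with hcR
  set d : ℝ := s₃.2 with hd
  have ham : a + (2 - z) ≤ m := by simp only [ha, hmm]; linarith
  have hmb : m + (2 - z) ≤ b := by simp only [hmm, hb]; linarith
  have ham' : a < m := by linarith
  have hmb' : m < b := by linarith
  have hab : a < b := lt_trans ham' hmb'
  have hL : ((a : ℝ), cL) ∈ C := by
    apply hT₂
    exact ⟨(-1, 0), subset_convexHull ℝ _ (by simp), by
      simp [Prod.ext_iff, ha, hcL]⟩
  have hR : ((b : ℝ), cR) ∈ C := by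
    apply hT₁
    exact ⟨(1, 0), subset_convexHull ℝ _ (by simp), by
      simp [Prod.ext_iff, hb, hcR]⟩
  have hP : ((m : ℝ), d - 1) ∈ C := by
    apply hD
    exact ⟨(0, -1), left_mem_segment ℝ _ _, by
      simp [Prod.ext_iff, hmm, hd]; ring⟩
  have hQ : ((m : ℝ), d + 1) ∈ C := by
    apply hD
    exact ⟨(0, 1), right_mem_segment ℝ _ _, by
      simp [Prod.ext_iff, hmm, hd]; ring⟩
  -- the region between two piecewise-affine graphs
  set f : ℝ → ℝ := fun x =>
    if x ≤ m then cL + (x - a) / (m - a) * (d - 1 - cL)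
    else cR + (x - b) / (m - b) * (d - 1 - cR) with hf
  set g : ℝ → ℝ := fun x =>
    if x ≤ m then cL + (x - a) / (m - a) * (d + 1 - cL)
    else cR + (x - b) / (m - b) * (d + 1 - cR) with hg
  have hma : m - a ≠ 0 := sub_ne_zero.mpr (ne_of_gt ham')
  have hmb0 : m - b ≠ 0 := sub_ne_zero.mpr (ne_of_lt hmb')
  have hsub : regionBetween f g (Ioo a b) ⊆ C := by
    rintro ⟨x, y⟩ ⟨hx, hy⟩
    simp only [mem_Ioo] at hx hy
    by_cases hxm : x ≤ m
    · refine rdl_tri_mem C hC hma hL hP hQ ?_ ?_ ?_ ?_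
      · apply div_pos (by linarith [hx.1]) (by linarith)
      · rw [div_le_one (by linarith)]; linarith
      · have := hy.1; rw [hf] at this; simp only [if_pos hxm] at this; linarith
      · have := hy.2; rw [hg] at this; simp only [if_pos hxm] at this; linarith
    · push_neg at hxm
      refine rdl_tri_mem C hC hmb0 hR hP hQ ?_ ?_ ?_ ?_
      · apply div_pos_of_neg_of_neg (by linarith [hx.2]) (by linarith)
      · rw [div_le_one_of_neg (by linarith)]; linarith
      · have := hy.1; rw [hf] at this; simp only [if_neg (not_le.mpr hxm)] at this; linarith
      · have := hy.2; rw [hg] at this; simp only [if_neg (not_le.mpr hxm)] at this; linarith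
  -- continuity of f and g
  have hcf : Continuous f := by
    rw [hf]
    apply Continuous.if_le (by fun_prop) (by fun_prop) continuous_id continuous_const
    intro x hx
    subst hx
    field_simp
    ring
  have hcg : Continuous g := by
    rw [hg]
    apply Continuous.if_le (by fun_prop) (by fun_prop) continuous_id continuous_const
    intro x hx
    subst hx
    field_simp
    ring
  have hfg : ∀ x ∈ Ioo a b, f x ≤ g x := by
    intro x hx
    simp only [mem_Ioo] at hx
    by_cases hxm : x ≤ m
    · simp only [hf, hg, if_pos hxm]
      have h1 : 0 ≤ (x - a) / (m - a) := div_nonneg (by linarith [hx.1]) (by linarith)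
      nlinarith
    · push_neg at hxm
      simp only [hf, hg, if_neg (not_le.mpr hxm)]
      have h1 : 0 ≤ (x - b) / (m - b) := le_of_lt (div_pos_of_neg_of_neg (by linarith [hx.2]) (by linarith))
      nlinarith
  have f_int : IntegrableOn f (Ioo a b) volume :=
    ((hcf.intervalIntegrable a b).1.mono_set Ioo_subset_Ioc_self)
  have g_int : IntegrableOn g (Ioo a b) volume :=
    ((hcg.intervalIntegrable a b).1.mono_set Ioo_subset_Ioc_self)
  have hvol : volume (regionBetween f g (Ioo a b)) =
      ENNReal.ofReal (∫ x in Ioo a b, (g - f) x) := by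
    rw [Measure.volume_eq_prod]
    exact volume_regionBetween_eq_integral f_int g_int measurableSet_Ioo hfg
  -- compute the integral
  have hI : (∫ x in Ioo a b, (g - f) x) = b - a := by
    have h1 : (∫ x in Ioo a b, (g - f) x) = ∫ x in a..b, (g - f) x := by
      rw [integral_of_le (le_of_lt hab),
        MeasureTheory.integral_Ioc_eq_integral_Ioo]
    rw [h1]
    have hi1 : IntervalIntegrable (g - f) volume a m :=
      ((hcg.sub hcf).intervalIntegrable a m)
    have hi2 : IntervalIntegrable (g - f) volume m b :=
      ((hcg.sub hcf).intervalIntegrable m b)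
    rw [← integral_add_adjacent_intervals hi1 hi2]
    have e1 : (∫ x in a..m, (g - f) x) = ∫ x in a..m, (2 / (m - a)) * (x - a) := by
      apply integral_congr
      intro x hx
      rw [uIcc_of_le (le_of_lt ham')] at hx
      simp only [Pi.sub_apply, hf, hg, if_pos hx.2]
      field_simp
      ring
    have e2 : (∫ x in m..b, (g - f) x) = ∫ x in m..b, (2 / (m - b)) * (x - b) := by
      apply integral_congr
      intro x hx
      rw [uIcc_of_le (le_of_lt hmb')] at hx
      simp only [Pi.sub_apply, hf, hg]
      by_cases hxm : x ≤ m
      · have hxm' : x = m := le_antisymm hxm hx.1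
        subst hxm'
        rw [if_pos (le_refl m), if_pos (le_refl m)]
        rw [div_self hma, div_mul_cancel₀ _ hmb0]
        ring
      · simp only [if_neg hxm]
        field_simp
        ring
    have key : ∀ u v : ℝ, (∫ x in u..v, (x - u)) = (v - u)^2 / 2 := by
      intro u v
      rw [integral_comp_sub_right (fun x => x) u,
        integral_id]
      ring
    have key2 : ∀ u v : ℝ, (∫ x in u..v, (x - v)) = -((v - u)^2 / 2) := by
      intro u v
      rw [integral_comp_sub_right (fun x => x) v,
        integral_id]
      ring
    rw [e1, e2, intervalIntegral.integral_const_mul, intervalIntegral.integral_const_mul,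
      key a m, key2 m b]
    field_simp
    ring
  calc ENNReal.ofReal (4 - 2 * z) ≤ ENNReal.ofReal (b - a) := by
        apply ENNReal.ofReal_le_ofReal; linarith
    _ = volume (regionBetween f g (Ioo a b)) := by rw [hvol, hI]
    _ ≤ volume C := measure_mono hsub
end

section
/- Let C ⊂ ℝ^{2n} be a convex body containing the origin in its interior, and let x : ℝ/ℤ → ∂C be an absolutely continuous closed characteristic on ∂C, i.e., ẋ(t) ∈ ℝ₊ · J ∂μ_C(x(t)) almost everywhere and μ_C(x(t)) = 1 for all t. Then the symplectic action 𝔸(x) = -½ ∫ ⟨Jẋ(t), x(t)⟩ dt of x equals its length measured in the Minkowski geometry of ½JC, i.e., 𝔸(x) = ∫ μ_{(½JC)°}(ẋ(t)) dt, where (½JC)° is the polar body of ½JC. -/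
open Set MeasureTheory
open scoped InnerProductSpace

/-- For a convex body `C ⊂ ℝ^{2n}` with `0` in its interior and an (absolutely
continuous) closed characteristic `x` on `∂C` — i.e. `x` is `1`-periodic,
`gauge C (x t) = 1` for all `t`, and a.e. `x'(t) = r • J g` for some `r > 0` and
some subgradient `g` of the Minkowski functional `gauge C` at `x t` — the action
`𝔸(x) = -½∫₀¹ ⟨J x'(t), x(t)⟩ dt` equals the `ℓ_{½JC}`-length
`∫₀¹ μ_{(½JC)°}(x'(t)) dt`, where `(½JC)°` is the polar body of `½JC`. -/
theorem action_eq_length_in_half_JC (n : ℕ) (hn : 0 < n)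
    (C : Set (EuclideanSpace ℝ (Fin n ⊕ Fin n)))
    (hconv : Convex ℝ C) (hcomp : IsCompact C) (h0 : (0 : EuclideanSpace ℝ (Fin n ⊕ Fin n)) ∈ interior C)
    (J : EuclideanSpace ℝ (Fin n ⊕ Fin n) →ₗ[ℝ] EuclideanSpace ℝ (Fin n ⊕ Fin n))
    (hJ : ∀ (v : EuclideanSpace ℝ (Fin n ⊕ Fin n)) (i : Fin n),
      J v (Sum.inl i) = v (Sum.inr i) ∧ J v (Sum.inr i) = -v (Sum.inl i))
    (x x' : ℝ → EuclideanSpace ℝ (Fin n ⊕ Fin n))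
    (hper : Function.Periodic x 1)
    (hderiv : ∀ᵐ t : ℝ, HasDerivAt x (x' t) t)
    (hchar : ∀ᵐ t : ℝ, ∃ r : ℝ, 0 < r ∧
      ∃ g : EuclideanSpace ℝ (Fin n ⊕ Fin n),
        (∀ y, gauge C (x t) + ⟪g, y - x t⟫_ℝ ≤ gauge C y) ∧ x' t = r • J g)
    (hbdry : ∀ t : ℝ, gauge C (x t) = 1) :
    -(1/2) * ∫ t in (0:ℝ)..1, ⟪J (x' t), x t⟫_ℝ =
      ∫ t in (0:ℝ)..1,
        gauge {y | ∀ z ∈ (fun p => (1/2 : ℝ) • J p) '' C, ⟪z, y⟫_ℝ ≤ 1} (x' t) := by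
  -- J preserves the inner product
  have hJJ : ∀ v w : EuclideanSpace ℝ (Fin n ⊕ Fin n), ⟪J v, J w⟫_ℝ = ⟪v, w⟫_ℝ := by
    intro v w
    simp only [PiLp.inner_apply, RCLike.inner_apply, starRingEnd_apply, star_trivial]
    rw [Fintype.sum_sum_type, Fintype.sum_sum_type]
    simp only [(hJ v _).1, (hJ v _).2, (hJ w _).1, (hJ w _).2]
    ring_nf
  -- J ∘ J = -id
  have hJ2 : ∀ v : EuclideanSpace ℝ (Fin n ⊕ Fin n), J (J v) = -v := by
    intro v
    ext i
    rcases i with i | i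
    · rw [(hJ (J v) i).1, (hJ v i).2]; rfl
    · rw [(hJ (J v) i).2, (hJ v i).1]; rfl
  have hnhds : C ∈ nhds (0 : EuclideanSpace ℝ (Fin n ⊕ Fin n)) :=
    mem_interior_iff_mem_nhds.mp h0
  set S : Set (EuclideanSpace ℝ (Fin n ⊕ Fin n)) :=
    {y | ∀ z ∈ (fun p => (1/2 : ℝ) • J p) '' C, ⟪z, y⟫_ℝ ≤ 1} with hS
  -- main pointwise identity
  have key : ∀ᵐ t : ℝ, -(1/2) * ⟪J (x' t), x t⟫_ℝ = gauge S (x' t) := by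
    filter_upwards [hchar] with t ht
    obtain ⟨r, hr, g, hsub, hx'⟩ := ht
    have hgu : ⟪g, x t⟫_ℝ = 1 := by
      have h1 := hsub 0
      have h2 := hsub ((2:ℝ) • x t)
      rw [gauge_zero, hbdry t] at h1
      rw [hbdry t, gauge_smul_of_nonneg (by norm_num : (0:ℝ) ≤ 2), smul_eq_mul,
        hbdry t] at h2
      have e1 : ((2:ℝ) • x t - x t) = x t := by
        rw [two_smul]; abel
      rw [e1] at h2
      have e2 : ((0:EuclideanSpace ℝ (Fin n ⊕ Fin n)) - x t) = -x t := by simp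
      rw [e2, inner_neg_right] at h1
      linarith
    have hle : ∀ y, ⟪g, y⟫_ℝ ≤ gauge C y := by
      intro y
      have := hsub y
      rw [hbdry t, inner_sub_right, hgu] at this
      linarith
    have huC : x t ∈ C := by
      have h1 : gauge C (x t) ≤ 1 := le_of_eq (hbdry t)
      rw [gauge_le_one_iff_mem_closure hconv hnhds] at h1
      rwa [hcomp.isClosed.closure_eq] at h1
    -- the inner products against points of the scaled set
    have hinner : ∀ (p : EuclideanSpace ℝ (Fin n ⊕ Fin n)) (c : ℝ),
        ⟪(1/2 : ℝ) • J p, c • x' t⟫_ℝ = c * (r/2) * ⟪p, g⟫_ℝ := by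
      intro p c
      rw [hx', real_inner_smul_left, real_inner_smul_right, real_inner_smul_right, hJJ]
      ring
    -- compute the gauge of S at x' t
    have hgauge : gauge S (x' t) = r / 2 := by
      rw [gauge_def']
      have hset : {s ∈ Set.Ioi (0:ℝ) | s⁻¹ • x' t ∈ S} = Set.Ici (r/2) := by
        ext s
        simp only [Set.mem_sep_iff, Set.mem_Ioi, Set.mem_Ici]
        constructor
        · rintro ⟨hs, hmem⟩
          have h3 := hmem ((1/2 : ℝ) • J (x t)) ⟨x t, huC, rfl⟩
          rw [hinner (x t) s⁻¹, real_inner_comm, hgu, mul_one] at h3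
          have h4 : s⁻¹ * (r/2) ≤ 1 := h3
          calc r/2 = s * (s⁻¹ * (r/2)) := by field_simp
            _ ≤ s * 1 := by nlinarith
            _ = s := mul_one s
        · intro hs
          have hs0 : 0 < s := lt_of_lt_of_le (by positivity) hs
          refine ⟨hs0, ?_⟩
          rintro z ⟨p, hp, rfl⟩
          rw [hinner p s⁻¹]
          have hpg : ⟪p, g⟫_ℝ ≤ 1 := by
            rw [real_inner_comm]
            exact le_trans (hle p) (gauge_le_one_of_mem hp)
          have hc0 : 0 ≤ s⁻¹ * (r/2) := by positivity
          have hc1 : s⁻¹ * (r/2) ≤ 1 := by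
            rw [inv_mul_le_iff₀ hs0, mul_one]; exact hs
          calc s⁻¹ * (r/2) * ⟪p, g⟫_ℝ ≤ s⁻¹ * (r/2) * 1 :=
                mul_le_mul_of_nonneg_left hpg hc0
            _ ≤ 1 := by rwa [mul_one]
      rw [hset, csInf_Ici]
    -- compute the action integrand
    rw [hgauge, hx', _root_.map_smul, real_inner_smul_left, hJ2, inner_neg_left, hgu]
    ring
  -- conclude by congruence of interval integrals
  rw [← intervalIntegral.integral_const_mul]
  apply intervalIntegral.integral_congr_ae
  filter_upwards [key] with t ht _
  exact ht
end
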